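/- Let Γ be a bipartite distance-regular graph with diameter D ≥ 4, valency k ≥ 3, and eigenvalues k = θ_0 > θ_1 > ⋯ > θ_D. Then p_D(θ_h) = 0 and p_{D-1}(θ_h) = 0 for 1 ≤ h ≤ D-1. Moreover, for 0 ≤ i,j ≤ D-2, Σ_{h=0}^{D} p_i(θ_h) p_j(θ_h) (k² − θ_h²) m_h = δ_{ij} |X| k_i b_i b_{i+1}. -/

import Mathlib

open Polynomial Finset Matrix

noncomputable section

attribute [local instance] Classical.propDecidable

/-- A bipartite distance-regular graph with diameter `D ≥ 4` and valency `k ≥ 3`: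
a finite connected simple graph such that for all `h,i,j ≤ D` and all vertices `x,y`
at distance `h`, the number of vertices `z` with `∂(x,z) = i` and `∂(z,y) = j`
is the constant `p h i j`, and `p h i j = 0` whenever `h + i + j` is odd. -/
structure BDRG (α : Type) [Fintype α] [DecidableEq α] where
  G : SimpleGraph α
  hconn : G.Connected
  D : ℕ
  hD : 4 ≤ D
  hdist : ∀ x y : α, G.dist x y ≤ D
  hdiam : ∃ x y : α, G.dist x y = D
  p : ℕ → ℕ → ℕ → ℕ
  hp : ∀ h i j : ℕ, h ≤ D → i ≤ D → j ≤ D → ∀ x y : α, G.dist x y = h →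
      Nat.card {z : α // G.dist x z = i ∧ G.dist z y = j} = p h i j
  hbip : ∀ h i j : ℕ, h ≤ D → i ≤ D → j ≤ D → Odd (h + i + j) → p h i j = 0
  hk : 3 ≤ p 0 1 1

namespace BDRG

variable {α : Type} [Fintype α] [DecidableEq α] (Γ : BDRG α)

/-- The intersection number `c_i = p^i_{1,i-1}` (with `c_0 = 0`), as a real number. -/
def c (i : ℕ) : ℝ := if i = 0 then 0 else (Γ.p i 1 (i - 1) : ℝ)

/-- The intersection number `b_i = p^i_{1,i+1}` (with `b_D = 0`), as a real number. -/
def b (i : ℕ) : ℝ := if i = Γ.D then 0 else (Γ.p i 1 (i + 1) : ℝ)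

/-- The valency `k = b_0`. -/
def k : ℝ := Γ.b 0

/-- The `i`-th valency `k_i = p^0_{ii}`, as a real number. -/
def kv (i : ℕ) : ℝ := (Γ.p 0 i i : ℝ)

/-- The polynomials `f_i` defined by `f_0 = 1`, `f_1 = λ` and
`λ f_i = b_{i-1} f_{i-1} + c_{i+1} f_{i+1}`. -/
def f : ℕ → Polynomial ℝ
  | 0 => 1
  | 1 => Polynomial.X
  | (i + 2) => Polynomial.C (Γ.c (i + 2))⁻¹ *
      (Polynomial.X * f (i + 1) - Polynomial.C (Γ.b i) * f i)

/-- The polynomials `p_i = Σ_{h ≤ i, i-h even} f_h`. -/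
def pp (i : ℕ) : Polynomial ℝ :=
  ∑ h ∈ Finset.range (i + 1), if (i - h) % 2 = 0 then Γ.f h else 0

/-- The `i`-th distance matrix of `Γ`, over `ℂ`. -/
def Amat (i : ℕ) : Matrix α α ℂ :=
  Matrix.of fun y z => if Γ.G.dist y z = i then 1 else 0

/-- The all-ones matrix. -/
def Jmat (α : Type) [Fintype α] : Matrix α α ℂ := Matrix.of fun _ _ => (1 : ℂ)

/-- `θ 0 > θ 1 > ⋯ > θ D` are the distinct eigenvalues of the adjacency matrix,
with `θ 0 = k`. -/
def IsEigenvalueSeq (θ : ℕ → ℝ) : Prop :=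
  θ 0 = Γ.k ∧
  (∀ i j : ℕ, i < j → j ≤ Γ.D → θ j < θ i) ∧
  (∀ i ≤ Γ.D, Module.End.HasEigenvalue (Matrix.mulVecLin (Γ.Amat 1)) ((θ i : ℂ))) ∧
  (∀ μ : ℂ, Module.End.HasEigenvalue (Matrix.mulVecLin (Γ.Amat 1)) μ →
    ∃ i ≤ Γ.D, μ = ((θ i : ℝ) : ℂ))

/-- The multiplicity of the eigenvalue `t`: the dimension of the corresponding
eigenspace of the adjacency matrix. -/
def m (t : ℝ) : ℕ :=
  Module.finrank ℂ (Module.End.eigenspace (Matrix.mulVecLin (Γ.Amat 1)) (t : ℂ))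

/-- `E` is the primitive idempotent for the eigenvalue `t`: the orthogonal projection
onto the `t`-eigenspace of the adjacency matrix. -/
def IsPrimitiveIdempotent (t : ℝ) (E : Matrix α α ℂ) : Prop :=
  Eᴴ = E ∧ E * E = E ∧
  ∀ v : α → ℂ, (Γ.Amat 1).mulVec v = (t : ℂ) • v ↔ E.mulVec v = v

/-- `θs` is the dual eigenvalue sequence of the matrix `E`, i.e.
`E = |X|⁻¹ Σ_{i=0}^{D} θs i • A_i`. -/
def IsDualEigSeq (E : Matrix α α ℂ) (θs : ℕ → ℝ) : Prop :=
  E = (Fintype.card α : ℂ)⁻¹ • ∑ i ∈ Finset.range (Γ.D + 1), ((θs i : ℝ) : ℂ) • Γ.Amat i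

/-- The two-variable polynomial `Ψ_i`, as a function of two real variables. -/
def Psi (i : ℕ) (lam mu : ℝ) : ℝ :=
  ∑ h ∈ Finset.range (i + 1), if (i - h) % 2 = 0 then
    (Γ.pp h).eval lam * (Γ.pp h).eval mu *
      (Γ.kv i * Γ.b i * Γ.b (i + 1)) / (Γ.kv h * Γ.b h * Γ.b (h + 1))
  else 0

/-- The index `n` is admissible: `θ_n` is one of `θ_1, θ_d, θ_{d+1}, θ_{D-1}` if `D` is
odd (`d = (D-1)/2`), and one of `θ_1, θ_{D-1}` if `D` is even. -/
def Admissible (n : ℕ) : Prop :=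
  (Odd Γ.D ∧ (n = 1 ∨ n = Γ.D / 2 ∨ n = Γ.D / 2 + 1 ∨ n = Γ.D - 1)) ∨
  (Even Γ.D ∧ (n = 1 ∨ n = Γ.D - 1))

/-- The polynomials `g_i` associated with the scalar `t`. -/
def g (t : ℝ) (i : ℕ) : Polynomial ℝ :=
  ∑ h ∈ Finset.range (i + 1), if (i - h) % 2 = 0 then
    Polynomial.C ((Γ.pp h).eval t * (Γ.kv i * Γ.b i * Γ.b (i + 1)) /
        ((Γ.pp i).eval t * (Γ.kv h * Γ.b h * Γ.b (h + 1)))) * Γ.pp h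
  else 0

/-- The dual idempotent `E_i* = E_i*(x)`. -/
def Estar (x : α) (i : ℕ) : Matrix α α ℂ :=
  Matrix.of fun y z => if y = z ∧ Γ.G.dist x y = i then 1 else 0

/-- The Hermitian inner product `⟨u,v⟩ = uᵗ v̄` on the standard module `ℂ^X`. -/
def dotp {α : Type} [Fintype α] (u v : α → ℂ) : ℂ := ∑ y, u y * (starRingEnd ℂ) (v y)

/-- The square norm `‖v‖²` with respect to the Hermitian inner product. -/
def nrmsq {α : Type} [Fintype α] (v : α → ℂ) : ℝ := ∑ y, Complex.normSq (v y)

/-- The vector `s_2 = Σ_{∂(x,y)=2} ŷ`. -/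
def s2vec (x : α) : α → ℂ := fun y => if Γ.G.dist x y = 2 then 1 else 0

/-- The scalar `ψ = b_2 (1 - b_3/(1+η))`. -/
def psi (η : ℝ) : ℝ := Γ.b 2 * (1 - Γ.b 3 / (1 + η))

/-- The scalar `θ̃ = -1 - b_2 b_3/(t² - b_2)`. -/
def tilde (t : ℝ) : ℝ := -1 - Γ.b 2 * Γ.b 3 / (t ^ 2 - Γ.b 2)

/-- The adjacency matrix of the local graph `Γ₂² = Γ₂²(x)`, whose vertices are the
vertices at distance 2 from `x`, adjacent when at distance 2 in `Γ`. -/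
def localAdj (x : α) :
    Matrix {y : α // Γ.G.dist x y = 2} {y : α // Γ.G.dist x y = 2} ℂ :=
  Matrix.of fun y z => if Γ.G.dist (y : α) (z : α) = 2 then 1 else 0

/-- `η 1, …, η k₂` enumerate the eigenvalues of the local graph `Γ₂²(x)` with their
multiplicities, ordered so that `η 1 = p²₂₂` and `η i = b₃ - 1` for `2 ≤ i ≤ k`. -/
def IsLocalEigSeq (x : α) (η : ℕ → ℝ) : Prop :=
  η 1 = (Γ.p 2 2 2 : ℝ) ∧
  (∀ i : ℕ, 2 ≤ i → i ≤ Γ.p 0 1 1 → η i = Γ.b 3 - 1) ∧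
  ∀ t : ℝ, Nat.card {i : ℕ // i ∈ Finset.Icc 1 (Γ.p 0 2 2) ∧ η i = t} =
    Module.finrank ℂ (Module.End.eigenspace (Matrix.mulVecLin (Γ.localAdj x)) (t : ℂ))

/-- The subconstituent (Terwilliger) algebra `T = T(x)`, generated by the adjacency
matrix together with the dual idempotents `E_0*, …, E_D*`. -/
def Talg (x : α) : Subalgebra ℂ (Matrix α α ℂ) :=
  Algebra.adjoin ℂ ({Γ.Amat 1} ∪ Set.range (Γ.Estar x))

/-- A `T`-module: a `T`-invariant subspace of the standard module `ℂ^X`. -/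
def IsTModule (x : α) (W : Submodule ℂ (α → ℂ)) : Prop :=
  ∀ B ∈ Γ.Talg x, ∀ w ∈ W, B.mulVec w ∈ W

/-- An irreducible `T`-module. -/
def IsIrreducibleTModule (x : α) (W : Submodule ℂ (α → ℂ)) : Prop :=
  W ≠ ⊥ ∧ Γ.IsTModule x W ∧
    ∀ W' : Submodule ℂ (α → ℂ), W' ≤ W → Γ.IsTModule x W' → W' = ⊥ ∨ W' = W

/-- The endpoint of a `T`-module `W` is `min {i : E_i* W ≠ 0}`. -/
def HasEndpoint (x : α) (W : Submodule ℂ (α → ℂ)) (e : ℕ) : Prop :=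
  (∃ w ∈ W, (Γ.Estar x e).mulVec w ≠ 0) ∧
  ∀ i : ℕ, i < e → ∀ w ∈ W, (Γ.Estar x i).mulVec w = 0

/-- A `T`-module `W` is thin whenever `dim E_i* W ≤ 1` for all `i`. -/
def IsThin (x : α) (W : Submodule ℂ (α → ℂ)) : Prop :=
  ∀ i : ℕ, Module.finrank ℂ (W.map (Matrix.mulVecLin (Γ.Estar x i))) ≤ 1

/-- `W` has local eigenvalue `η`: every vector of `E_2* W` is an eigenvector of
`E_2* A_2 E_2*` with eigenvalue `η`. -/
def HasLocalEig (x : α) (W : Submodule ℂ (α → ℂ)) (η : ℝ) : Prop :=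
  ∀ w ∈ W, (Γ.Estar x 2 * Γ.Amat 2 * Γ.Estar x 2).mulVec w =
    (η : ℂ) • ((Γ.Estar x 2).mulVec w)

/-- Membership in `U`, the orthogonal complement of `E_2* V_0 + E_2* Y` in `E_2* V`,
where `V_0` is the (unique) irreducible `T`-module with endpoint `0` and `Y` is the
span of the irreducible `T`-modules with endpoint `1`. -/
def memU (x : α) (V0 : Submodule ℂ (α → ℂ)) (v : α → ℂ) : Prop :=
  (Γ.Estar x 2).mulVec v = v ∧
  (∀ w ∈ V0, BDRG.dotp v ((Γ.Estar x 2).mulVec w) = 0) ∧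
  ∀ W : Submodule ℂ (α → ℂ), Γ.IsIrreducibleTModule x W → Γ.HasEndpoint x W 1 →
    ∀ w ∈ W, BDRG.dotp v ((Γ.Estar x 2).mulVec w) = 0

/-- Membership in `U_η = {v ∈ U : E_2* A_2 E_2* v = η v}`. -/
def memUeta (x : α) (V0 : Submodule ℂ (α → ℂ)) (η : ℝ) (v : α → ℂ) : Prop :=
  Γ.memU x V0 v ∧ (Γ.Estar x 2 * Γ.Amat 2 * Γ.Estar x 2).mulVec v = (η : ℂ) • v

/-- The subspace `M v` of the standard module, where `M` is the Bose–Mesner algebra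
(the subalgebra of `Mat_X(ℂ)` generated by the adjacency matrix). -/
def Mspan (v : α → ℂ) : Submodule ℂ (α → ℂ) :=
  Submodule.span ℂ
    {w | ∃ B ∈ Algebra.adjoin ℂ ({Γ.Amat 1} : Set (Matrix α α ℂ)), w = B.mulVec v}

/-- Isomorphism of `T`-modules: a linear bijection `W → W'` commuting with every
element of `T`. -/
def TIso (x : α) (W W' : Submodule ℂ (α → ℂ)) : Prop :=
  ∃ σ : (α → ℂ) →ₗ[ℂ] (α → ℂ), Set.BijOn σ (W : Set (α → ℂ)) (W' : Set (α → ℂ)) ∧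
    ∀ B ∈ Γ.Talg x, ∀ w ∈ W, σ (B.mulVec w) = B.mulVec (σ w)

/-- The scalar `Δ = (k-2)(c_3-1) - (c_2-1) p²₂₂`. -/
def Delta : ℝ := (Γ.k - 2) * (Γ.c 3 - 1) - (Γ.c 2 - 1) * (Γ.p 2 2 2 : ℝ)

/-- `Γ` is taut (with respect to the eigenvalue sequence `θ`): `Δ ≠ 0` and equality
holds in MacLean's fundamental bound. -/
def IsTaut (θ : ℕ → ℝ) : Prop :=
  Γ.Delta ≠ 0 ∧
  Γ.b 3 * (Γ.b 2 * (Γ.k - 2) - (Γ.c 2 - 1) * (θ 1) ^ 2) *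
      (Γ.b 2 * (Γ.k - 2) - (Γ.c 2 - 1) * (θ (Γ.D / 2)) ^ 2) =
    Γ.b 1 * Γ.Delta * ((θ 1) ^ 2 - Γ.b 2) * (Γ.b 2 - (θ (Γ.D / 2)) ^ 2)

/-- `Γ` is spectrally taut with respect to `x`: each local eigenvalue `η_i`
with `k+1 ≤ i ≤ k₂` equals `θ̃_1` or `θ̃_d`. -/
def SpectrallyTaut (x : α) (θ : ℕ → ℝ) : Prop :=
  ∃ η : ℕ → ℝ, Γ.IsLocalEigSeq x η ∧
    ∀ i : ℕ, Γ.p 0 1 1 + 1 ≤ i → i ≤ Γ.p 0 2 2 →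
      η i = Γ.tilde (θ 1) ∨ η i = Γ.tilde (θ (Γ.D / 2))

/-- `Γ` is taut with respect to `x`: every irreducible `T(x)`-module with endpoint 2
is thin with local eigenvalue `θ̃_1` or `θ̃_d`. -/
def TautWrt (x : α) (θ : ℕ → ℝ) : Prop :=
  ∀ W : Submodule ℂ (α → ℂ), Γ.IsIrreducibleTModule x W → Γ.HasEndpoint x W 2 →
    Γ.IsThin x W ∧
      (Γ.HasLocalEig x W (Γ.tilde (θ 1)) ∨ Γ.HasLocalEig x W (Γ.tilde (θ (Γ.D / 2))))

end BDRG

namespace BDRG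

variable {α : Type} [Fintype α] [DecidableEq α] (Γ : BDRG α)

lemma dist_zero_iff (x y : α) : Γ.G.dist x y = 0 ↔ x = y :=
  Γ.hconn.dist_eq_zero_iff

lemma dist_tri (x y z : α) : Γ.G.dist x z ≤ Γ.G.dist x y + Γ.G.dist y z :=
  Γ.hconn.dist_triangle

/-- The fundamental counting lemma. -/
lemma countEq (x y : α) (i j : ℕ) (hi : i ≤ Γ.D) (hj : j ≤ Γ.D) :
    (Finset.univ.filter fun z => Γ.G.dist x z = i ∧ Γ.G.dist z y = j).card
      = Γ.p (Γ.G.dist x y) i j := by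
  rw [← Γ.hp _ i j (Γ.hdist x y) hi hj x y rfl, Nat.card_eq_fintype_card]
  exact (Fintype.card_subtype _).symm

lemma sphere_card (x : α) (i : ℕ) (hi : i ≤ Γ.D) :
    (Finset.univ.filter fun z => Γ.G.dist x z = i).card = Γ.p 0 i i := by
  have h := Γ.countEq x x i i hi hi
  rw [(Γ.dist_zero_iff x x).mpr rfl] at h
  rw [← h]
  congr 1
  ext z
  simp only [Finset.mem_filter, Finset.mem_univ, true_and]
  constructor
  · intro hz; exact ⟨hz, by rwa [SimpleGraph.dist_comm]⟩
  · intro hz; exact hz.1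

lemma exists_step (x y : α) (m : ℕ) (h : Γ.G.dist x y = m + 1) :
    ∃ z, Γ.G.dist x z = 1 ∧ Γ.G.dist z y = m := by
  obtain ⟨w, hw⟩ := Γ.hconn.exists_walk_length_eq_dist x y
  rw [h] at hw
  cases w with
  | nil => simp at hw
  | @cons _ z _ ha q =>
    refine ⟨z, SimpleGraph.dist_eq_one_iff_adj.mpr ha, ?_⟩
    have h1 : Γ.G.dist z y ≤ m := by
      have := SimpleGraph.dist_le q
      simp only [SimpleGraph.Walk.length_cons] at hw
      omega
    have h2 := Γ.dist_tri x z y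
    have h3 : Γ.G.dist x z ≤ 1 := SimpleGraph.dist_le (SimpleGraph.Walk.cons ha .nil)
    omega

lemma exists_pair : ∀ m, m ≤ Γ.D → ∃ x y : α, Γ.G.dist x y = m := by
  have key : ∀ j m, m + j = Γ.D → ∃ x y : α, Γ.G.dist x y = m := by
    intro j
    induction j with
    | zero => intro m hm; obtain ⟨x, y, h⟩ := Γ.hdiam; exact ⟨x, y, by omega⟩
    | succ n ih =>
      intro m hm
      obtain ⟨x, y, h⟩ := ih (m + 1) (by omega)
      obtain ⟨z, hz1, hz2⟩ := Γ.exists_step x y m h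
      exact ⟨z, y, hz2⟩
  intro m hm
  exact key (Γ.D - m) m (by omega)

lemma D1 : 1 ≤ Γ.D := by have := Γ.hD; omega

lemma kv0 : Γ.kv 0 = 1 := by
  obtain ⟨x⟩ := Γ.hconn.nonempty
  have h := Γ.countEq x x 0 0 (by omega) (by omega)
  rw [(Γ.dist_zero_iff x x).mpr rfl] at h
  have hs : (Finset.univ.filter fun z => Γ.G.dist x z = 0 ∧ Γ.G.dist z x = 0) = {x} := by
    ext z
    simp only [Finset.mem_filter, Finset.mem_univ, true_and, Finset.mem_singleton,
      Γ.dist_zero_iff]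
    constructor
    · rintro ⟨h1, -⟩; exact h1.symm
    · rintro rfl; exact ⟨rfl, rfl⟩
  rw [hs, Finset.card_singleton] at h
  show (Γ.p 0 0 0 : ℝ) = 1
  rw [← h]
  norm_num

lemma k_eq : Γ.k = (Γ.p 0 1 1 : ℝ) := by
  have : (0:ℕ) ≠ Γ.D := by have := Γ.hD; omega
  simp [BDRG.k, BDRG.b, this]

lemma k_ge : (3:ℝ) ≤ Γ.k := by
  rw [Γ.k_eq]
  exact_mod_cast Γ.hk

lemma k_pos : (0:ℝ) < Γ.k := lt_of_lt_of_le (by norm_num) Γ.k_ge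

lemma deg_card (y : α) :
    (Finset.univ.filter fun z => Γ.G.dist y z = 1).card = Γ.p 0 1 1 :=
  Γ.sphere_card y 1 Γ.D1

lemma kv1 : Γ.kv 1 = Γ.k := by
  rw [Γ.k_eq]; rfl

lemma c1_eq : Γ.c 1 = 1 := by
  obtain ⟨x, y, hxy⟩ := Γ.exists_pair 1 Γ.D1
  have h := Γ.countEq x y 1 0 Γ.D1 (by omega)
  rw [hxy] at h
  have hs : (Finset.univ.filter fun z => Γ.G.dist x z = 1 ∧ Γ.G.dist z y = 0) = {y} := by
    ext z
    simp only [Finset.mem_filter, Finset.mem_univ, true_and, Finset.mem_singleton,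
      Γ.dist_zero_iff]
    constructor
    · rintro ⟨-, h2⟩; exact h2
    · rintro rfl; exact ⟨hxy, rfl⟩
  rw [hs, Finset.card_singleton] at h
  show Γ.c 1 = 1
  rw [BDRG.c, if_neg (by omega : (1:ℕ) ≠ 0), ← h]
  norm_num

/-- `b_h + c_h = k` for `1 ≤ h ≤ D` (with the convention `b_D = 0`). -/
lemma bc_sum (h : ℕ) (h1 : 1 ≤ h) (h2 : h ≤ Γ.D) : Γ.c h + Γ.b h = Γ.k := by
  obtain ⟨x, y, hxy⟩ := Γ.exists_pair h h2
  set N := Finset.univ.filter fun z => Γ.G.dist x z = 1 with hN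
  have hcard : N.card = Γ.p 0 1 1 := Γ.deg_card x
  have hmaps : ∀ z ∈ N, Γ.G.dist z y ∈ ({h - 1, h, h + 1} : Finset ℕ) := by
    intro z hz
    simp only [hN, Finset.mem_filter, Finset.mem_univ, true_and] at hz
    have hzx : Γ.G.dist z x = 1 := by rwa [SimpleGraph.dist_comm]
    have t1 := Γ.dist_tri z x y
    have t2 := Γ.dist_tri x z y
    simp only [Finset.mem_insert, Finset.mem_singleton]
    omega
  have hfib := Finset.card_eq_sum_card_fiberwise hmaps
  have hne1 : (h:ℕ) - 1 ∉ ({h, h+1} : Finset ℕ) := by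
    simp only [Finset.mem_insert, Finset.mem_singleton]; omega
  have hne2 : (h:ℕ) ∉ ({h+1} : Finset ℕ) := by
    simp only [Finset.mem_singleton]; omega
  rw [Finset.sum_insert hne1, Finset.sum_insert hne2, Finset.sum_singleton] at hfib
  have fib_eq : ∀ v, (N.filter fun z => Γ.G.dist z y = v)
      = Finset.univ.filter fun z => Γ.G.dist x z = 1 ∧ Γ.G.dist z y = v := by
    intro v
    rw [hN, Finset.filter_filter]
  have e1 : (N.filter fun z => Γ.G.dist z y = h - 1).card = Γ.p h 1 (h-1) := by
    rw [fib_eq, Γ.countEq x y 1 (h-1) Γ.D1 (by omega), hxy]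
  have e2 : (N.filter fun z => Γ.G.dist z y = h).card = 0 := by
    rw [fib_eq, Γ.countEq x y 1 h Γ.D1 h2, hxy]
    exact Γ.hbip h 1 h h2 Γ.D1 h2 ⟨h, by ring⟩
  have e3 : (N.filter fun z => Γ.G.dist z y = h + 1).card
      = if h = Γ.D then 0 else Γ.p h 1 (h+1) := by
    by_cases hD : h = Γ.D
    · rw [if_pos hD, Finset.card_eq_zero, Finset.filter_eq_empty_iff]
      intro z _
      have := Γ.hdist z y
      omega
    · rw [if_neg hD, fib_eq, Γ.countEq x y 1 (h+1) Γ.D1 (by omega), hxy]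
  rw [e1, e2, e3, hcard] at hfib
  have hc : Γ.c h = (Γ.p h 1 (h-1) : ℝ) := by
    rw [BDRG.c, if_neg (by omega : ¬ h = 0)]
  by_cases hD : h = Γ.D
  · rw [if_pos hD] at hfib
    rw [hc, Γ.k_eq, BDRG.b, if_pos hD, hfib]
    push_cast
    ring
  · rw [if_neg hD] at hfib
    rw [hc, Γ.k_eq, BDRG.b, if_neg hD, hfib]
    push_cast
    ring


lemma cD_eq : Γ.c Γ.D = Γ.k := by
  have h := Γ.bc_sum Γ.D Γ.D1 le_rfl
  have hb : Γ.b Γ.D = 0 := by rw [BDRG.b, if_pos rfl]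
  linarith

/-- `k_i c_i = k_{i-1} b_{i-1}`. -/
lemma kvcb (i : ℕ) (h1 : 1 ≤ i) (h2 : i ≤ Γ.D) :
    Γ.kv i * Γ.c i = Γ.kv (i-1) * Γ.b (i-1) := by
  obtain ⟨x⟩ := Γ.hconn.nonempty
  have key : ∀ z w : α,
      (if Γ.G.dist x z = i - 1 ∧ Γ.G.dist z w = 1 ∧ Γ.G.dist w x = i then (1:ℕ) else 0)
      = (if Γ.G.dist x z = i - 1 then (if Γ.G.dist z w = 1 ∧ Γ.G.dist w x = i then (1:ℕ) else 0) else 0) := by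
    intro z w
    by_cases hz : Γ.G.dist x z = i - 1 <;> simp [hz]
  have key2 : ∀ z w : α,
      (if Γ.G.dist x z = i - 1 ∧ Γ.G.dist z w = 1 ∧ Γ.G.dist w x = i then (1:ℕ) else 0)
      = (if Γ.G.dist x w = i then (if Γ.G.dist w z = 1 ∧ Γ.G.dist z x = i - 1 then (1:ℕ) else 0) else 0) := by
    intro z w
    rw [SimpleGraph.dist_comm (u := x) (v := w), SimpleGraph.dist_comm (u := w) (v := z),
      SimpleGraph.dist_comm (u := z) (v := x)]
    by_cases ha : Γ.G.dist x z = i - 1 <;> by_cases hb : Γ.G.dist z w = 1 <;>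
      by_cases hcc : Γ.G.dist w x = i <;> simp [ha, hb, hcc] <;> tauto
  have count1 : ∑ z : α, ∑ w : α,
      (if Γ.G.dist x z = i - 1 ∧ Γ.G.dist z w = 1 ∧ Γ.G.dist w x = i then (1:ℕ) else 0)
      = Γ.p 0 (i-1) (i-1) * Γ.p (i-1) 1 i := by
    have hh : ∀ z : α, ∑ w : α,
        (if Γ.G.dist x z = i - 1 ∧ Γ.G.dist z w = 1 ∧ Γ.G.dist w x = i then (1:ℕ) else 0)
        = if Γ.G.dist x z = i - 1 then Γ.p (i-1) 1 i else 0 := by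
      intro z
      simp_rw [key]
      by_cases hz : Γ.G.dist x z = i - 1
      · simp only [hz, eq_self_iff_true, if_true]
        rw [Finset.sum_boole]
        norm_cast
        rw [Γ.countEq z x 1 i Γ.D1 h2]
        rw [SimpleGraph.dist_comm (u := z) (v := x), hz]
      · simp [hz]
    simp_rw [hh]
    have hrw : ∀ z : α, (if Γ.G.dist x z = i - 1 then Γ.p (i-1) 1 i else 0)
        = (if Γ.G.dist x z = i - 1 then 1 else 0) * Γ.p (i-1) 1 i := by
      intro z; split <;> simp
    simp_rw [hrw]
    rw [← Finset.sum_mul, Finset.sum_boole]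
    norm_cast
    rw [Γ.sphere_card x (i-1) (by omega)]
  have count2 : ∑ z : α, ∑ w : α,
      (if Γ.G.dist x z = i - 1 ∧ Γ.G.dist z w = 1 ∧ Γ.G.dist w x = i then (1:ℕ) else 0)
      = Γ.p 0 i i * Γ.p i 1 (i-1) := by
    rw [Finset.sum_comm]
    have hh : ∀ w : α, ∑ z : α,
        (if Γ.G.dist x z = i - 1 ∧ Γ.G.dist z w = 1 ∧ Γ.G.dist w x = i then (1:ℕ) else 0)
        = if Γ.G.dist x w = i then Γ.p i 1 (i-1) else 0 := by
      intro w
      simp_rw [key2]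
      by_cases hw : Γ.G.dist x w = i
      · simp only [hw, eq_self_iff_true, if_true]
        rw [Finset.sum_boole]
        norm_cast
        rw [Γ.countEq w x 1 (i-1) Γ.D1 (by omega)]
        rw [SimpleGraph.dist_comm (u := w) (v := x), hw]
      · simp [hw]
    simp_rw [hh]
    have hrw : ∀ w : α, (if Γ.G.dist x w = i then Γ.p i 1 (i-1) else 0)
        = (if Γ.G.dist x w = i then 1 else 0) * Γ.p i 1 (i-1) := by
      intro w; split <;> simp
    simp_rw [hrw]
    rw [← Finset.sum_mul, Finset.sum_boole]
    norm_cast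
    rw [Γ.sphere_card x i h2]
  have hnat : Γ.p 0 (i-1) (i-1) * Γ.p (i-1) 1 i = Γ.p 0 i i * Γ.p i 1 (i-1) := by
    rw [← count1, ← count2]
  have hc : Γ.c i = (Γ.p i 1 (i-1) : ℝ) := by
    rw [BDRG.c, if_neg (by omega : ¬ i = 0)]
  have hbm : Γ.b (i-1) = (Γ.p (i-1) 1 i : ℝ) := by
    have hne : ¬ (i - 1 = Γ.D) := by omega
    have hsub : (i - 1) + 1 = i := by omega
    rw [BDRG.b, if_neg hne, hsub]
  rw [hc, hbm]
  show (Γ.p 0 i i : ℝ) * _ = (Γ.p 0 (i-1) (i-1) : ℝ) * _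
  exact_mod_cast hnat.symm

/-- `c_i ≥ 1` for `1 ≤ i ≤ D`. -/
lemma c_pos (i : ℕ) (h1 : 1 ≤ i) (h2 : i ≤ Γ.D) : 0 < Γ.c i := by
  obtain ⟨x, y, hxy⟩ := Γ.exists_pair i h2
  obtain ⟨z, hz1, hz2⟩ := Γ.exists_step x y (i-1) (by omega)
  have h := Γ.countEq x y 1 (i-1) Γ.D1 (by omega)
  rw [hxy] at h
  have hpos : 0 < (Finset.univ.filter fun w => Γ.G.dist x w = 1 ∧ Γ.G.dist w y = i - 1).card := by
    rw [Finset.card_pos]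
    exact ⟨z, by simp only [Finset.mem_filter, Finset.mem_univ, true_and]; exact ⟨hz1, hz2⟩⟩
  rw [h] at hpos
  have hc : Γ.c i = (Γ.p i 1 (i-1) : ℝ) := by
    rw [BDRG.c, if_neg (by omega : ¬ i = 0)]
  rw [hc]
  exact_mod_cast hpos

lemma c_ne (i : ℕ) (h1 : 1 ≤ i) (h2 : i ≤ Γ.D) : Γ.c i ≠ 0 :=
  ne_of_gt (Γ.c_pos i h1 h2)

end BDRG

namespace BDRG

variable {α : Type} [Fintype α] [DecidableEq α] (Γ : BDRG α)

lemma Amat_apply (i : ℕ) (x y : α) :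
    Γ.Amat i x y = if Γ.G.dist x y = i then 1 else 0 := rfl

lemma Amat_zero : Γ.Amat 0 = 1 := by
  ext x y
  rw [Amat_apply, Matrix.one_apply]
  by_cases h : x = y
  · rw [if_pos h, if_pos ((Γ.dist_zero_iff x y).mpr h)]
  · rw [if_neg h, if_neg (fun hc => h ((Γ.dist_zero_iff x y).mp hc))]

lemma real_smul_mat (r : ℝ) (M : Matrix α α ℂ) : r • M = (r : ℂ) • M := by
  ext x y
  simp [Complex.real_smul]

/-- `A_1 A_h = c_{h+1} A_{h+1} + b_{h-1} A_{h-1}` for `1 ≤ h ≤ D-1`. -/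
lemma A_mul_Amat (h : ℕ) (hh1 : 1 ≤ h) (hh2 : h ≤ Γ.D - 1) :
    Γ.Amat 1 * Γ.Amat h = Γ.c (h+1) • Γ.Amat (h+1) + Γ.b (h-1) • Γ.Amat (h-1) := by
  have hD := Γ.hD
  ext x y
  rw [Matrix.mul_apply]
  have hlhs : ∀ z : α, Γ.Amat 1 x z * Γ.Amat h z y
      = if Γ.G.dist x z = 1 ∧ Γ.G.dist z y = h then (1:ℂ) else 0 := by
    intro z
    rw [Amat_apply, Amat_apply, ite_and]
    split <;> split <;> simp
  simp_rw [hlhs]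
  rw [Finset.sum_boole]
  rw [Γ.countEq x y 1 h Γ.D1 (by omega)]
  have hrhs : (Γ.c (h+1) • Γ.Amat (h+1) + Γ.b (h-1) • Γ.Amat (h-1)) x y
      = (Γ.c (h+1) : ℂ) * (if Γ.G.dist x y = h + 1 then 1 else 0)
        + (Γ.b (h-1) : ℂ) * (if Γ.G.dist x y = h - 1 then 1 else 0) := by
    rw [real_smul_mat, real_smul_mat]
    simp [Amat_apply]
  rw [hrhs]
  by_cases hc1 : Γ.G.dist x y = h + 1
  · rw [hc1, if_pos rfl, if_neg (by omega : ¬ (h + 1 = h - 1))]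
    have : Γ.c (h+1) = (Γ.p (h+1) 1 h : ℝ) := by
      rw [BDRG.c, if_neg (by omega : ¬ h + 1 = 0)]
      norm_num
    rw [this]
    push_cast
    ring
  · by_cases hc2 : Γ.G.dist x y = h - 1
    · rw [hc2, if_neg (by omega : ¬ (h - 1 = h + 1)), if_pos rfl]
      have : Γ.b (h-1) = (Γ.p (h-1) 1 h : ℝ) := by
        rw [BDRG.b, if_neg (by omega : ¬ (h - 1 = Γ.D))]
        congr 2
        omega
      rw [this]
      push_cast
      ring
    · rw [if_neg hc1, if_neg (fun hc => hc2 (by omega))]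
      by_cases hc3 : Γ.G.dist x y = h
      · rw [hc3]
        rw [Γ.hbip h 1 h (by omega) Γ.D1 (by omega) ⟨h, by ring⟩]
        push_cast
        ring
      · have : Γ.p (Γ.G.dist x y) 1 h = 0 := by
          rw [← Γ.countEq x y 1 h Γ.D1 (by omega)]
          rw [Finset.card_eq_zero, Finset.filter_eq_empty_iff]
          intro z _
          rintro ⟨hz1, hz2⟩
          have t1 := Γ.dist_tri x z y
          have t2 := Γ.dist_tri z x y
          have hzx : Γ.G.dist z x = 1 := by rwa [SimpleGraph.dist_comm]
          omega
        rw [this]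
        push_cast
        ring

/-- The matrix `P_i = A_i + A_{i-2} + ⋯`. -/
def PP (r : ℕ) : Matrix α α ℂ :=
  ∑ h ∈ Finset.range (r+1), if (r - h) % 2 = 0 then Γ.Amat h else 0

lemma PP_zero : Γ.PP 0 = 1 := by
  rw [BDRG.PP]
  simp [Γ.Amat_zero]

lemma PP_one : Γ.PP 1 = Γ.Amat 1 := by
  rw [BDRG.PP]
  rw [Finset.sum_range_succ, Finset.sum_range_one]
  norm_num

lemma PP_succ (r : ℕ) : Γ.PP (r+2) = Γ.Amat (r+2) + Γ.PP r := by
  rw [BDRG.PP, BDRG.PP, Finset.sum_range_succ, Finset.sum_range_succ]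
  rw [if_pos (by omega : (r + 2 - (r+2)) % 2 = 0),
    if_neg (by omega : ¬ (r + 2 - (r+1)) % 2 = 0)]
  have : ∀ h ∈ Finset.range (r+1),
      (if (r + 2 - h) % 2 = 0 then Γ.Amat h else 0)
        = (if (r - h) % 2 = 0 then Γ.Amat h else 0) := by
    intro h hh
    rw [Finset.mem_range] at hh
    congr 1
    simp only [eq_iff_iff]
    omega
  rw [Finset.sum_congr rfl this]
  abel

/-- `aeval A₁ (f h) = A_h`. -/
lemma aeval_f : ∀ h, h ≤ Γ.D → Polynomial.aeval (Γ.Amat 1) (Γ.f h) = Γ.Amat h := by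
  have key : ∀ h, h + 1 ≤ Γ.D →
      Polynomial.aeval (Γ.Amat 1) (Γ.f h) = Γ.Amat h ∧
      Polynomial.aeval (Γ.Amat 1) (Γ.f (h+1)) = Γ.Amat (h+1) := by
    intro h
    induction h with
    | zero =>
      intro _
      constructor
      · show Polynomial.aeval (Γ.Amat 1) (Γ.f 0) = Γ.Amat 0
        rw [show Γ.f 0 = 1 from rfl, _root_.map_one, Γ.Amat_zero]
      · show Polynomial.aeval (Γ.Amat 1) (Γ.f 1) = Γ.Amat 1
        rw [show Γ.f 1 = Polynomial.X from rfl, Polynomial.aeval_X]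
    | succ n ih =>
      intro hn
      obtain ⟨ih1, ih2⟩ := ih (by omega)
      refine ⟨ih2, ?_⟩
      show Polynomial.aeval (Γ.Amat 1) (Γ.f (n+2)) = Γ.Amat (n+2)
      rw [show Γ.f (n+2) = Polynomial.C (Γ.c (n+2))⁻¹ *
          (Polynomial.X * Γ.f (n+1) - Polynomial.C (Γ.b n) * Γ.f n) from rfl]
      rw [_root_.map_mul, map_sub, _root_.map_mul, _root_.map_mul, Polynomial.aeval_X, Polynomial.aeval_C,
        Polynomial.aeval_C, ih1, ih2]
      have hAm := Γ.A_mul_Amat (n+1) (by omega) (by omega)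
      rw [hAm]
      have e1 : (algebraMap ℝ (Matrix α α ℂ)) (Γ.b n) * Γ.Amat n = Γ.b n • Γ.Amat n := by
        rw [Algebra.smul_def]
      have hsimp : (n + 1 + 1 : ℕ) = n + 2 := rfl
      have hsub : (n + 1 - 1 : ℕ) = n := rfl
      rw [e1, hsimp, hsub, add_sub_cancel_right]
      rw [Algebra.smul_def (Γ.c (n+2)) (Γ.Amat (n+2)), ← _root_.mul_assoc,
        ← _root_.map_mul (algebraMap ℝ (Matrix α α ℂ)),
        inv_mul_cancel₀ (Γ.c_ne (n+2) (by omega) (by omega)), _root_.map_one, one_mul]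
  intro h hh
  rcases Nat.lt_or_ge h Γ.D with hlt | hge
  · exact (key h (by omega)).1
  · have hd : h = Γ.D := le_antisymm hh hge
    subst hd
    have hres := (key (Γ.D - 1) (by have := Γ.hD; omega)).2
    have e : Γ.D - 1 + 1 = Γ.D := by have := Γ.hD; omega
    rwa [e] at hres

lemma aeval_pp (r : ℕ) (hr : r ≤ Γ.D) :
    Polynomial.aeval (Γ.Amat 1) (Γ.pp r) = Γ.PP r := by
  rw [BDRG.pp, BDRG.PP, map_sum]
  refine Finset.sum_congr rfl fun h hh => ?_
  rw [Finset.mem_range] at hh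
  split
  · exact Γ.aeval_f h (by omega)
  · exact map_zero _

end BDRG

namespace BDRG

variable {α : Type} [Fintype α] [DecidableEq α] (Γ : BDRG α)

/-- `A P_i = b_{i+1} P_{i-1} + c_{i+1} P_{i+1}` for `0 ≤ i ≤ D-1`
(with the convention that the first term vanishes for `i = 0`). -/
lemma A_mul_PP : ∀ i, i ≤ Γ.D - 1 →
    Γ.Amat 1 * Γ.PP i
      = Γ.b (i+1) • (if i = 0 then 0 else Γ.PP (i-1)) + Γ.c (i+1) • Γ.PP (i+1) := by
  have hD := Γ.hD
  intro i
  induction i using Nat.strong_induction_on with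
  | _ i ih =>
    intro hi
    match i with
    | 0 =>
      rw [if_pos rfl, Γ.PP_zero, mul_one, smul_zero, zero_add, Γ.c1_eq, one_smul]
      exact (Γ.PP_one).symm
    | 1 =>
      rw [if_neg one_ne_zero, Γ.PP_one]
      have h1 := Γ.A_mul_Amat 1 le_rfl (by omega)
      have h2 : Γ.PP (1+1) = Γ.Amat 2 + Γ.PP 0 := Γ.PP_succ 0
      have hbc : Γ.c 2 + Γ.b 2 = Γ.k := Γ.bc_sum 2 (by omega) (by omega)
      rw [h1, h2, Γ.PP_zero]
      show Γ.c 2 • Γ.Amat 2 + Γ.b 0 • Γ.Amat 0 = Γ.b 2 • (1:Matrix α α ℂ) + Γ.c 2 • (Γ.Amat 2 + 1)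
      rw [Γ.Amat_zero, smul_add]
      rw [show Γ.b 0 = Γ.k from rfl, ← hbc, add_smul]
      abel
    | (m+2) =>
      have hIH := ih m (by omega) (by omega)
      rw [if_neg (by omega : ¬ (m + 2 = 0))]
      have hP2 : Γ.PP (m+2) = Γ.Amat (m+2) + Γ.PP m := Γ.PP_succ m
      have hP3 : Γ.PP (m+2+1) = Γ.Amat (m+2+1) + Γ.PP (m+1) := Γ.PP_succ (m+1)
      have hAm : Γ.Amat 1 * Γ.Amat (m+2)
          = Γ.c (m+2+1) • Γ.Amat (m+2+1) + Γ.b (m+1) • Γ.Amat (m+1) := by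
        have := Γ.A_mul_Amat (m+2) (by omega) (by omega)
        have e : m + 2 - 1 = m + 1 := by omega
        rw [e] at this
        exact this
      have hMP : Γ.Amat (m+1) + (if m = 0 then (0:Matrix α α ℂ) else Γ.PP (m-1))
          = Γ.PP (m+1) := by
        match m with
        | 0 => rw [if_pos rfl, add_zero]; exact (Γ.PP_one).symm
        | (t+1) =>
          rw [if_neg (by omega : ¬ (t + 1 = 0))]
          exact (Γ.PP_succ t).symm
      have hbc1 : Γ.b (m+1) + Γ.c (m+1) = Γ.k := by
        have := Γ.bc_sum (m+1) (by omega) (by omega); linarith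
      have hbc3 : Γ.b (m+2+1) + Γ.c (m+2+1) = Γ.k := by
        have := Γ.bc_sum (m+2+1) (by omega) (by omega); linarith
      have hPm1 : Γ.PP (m+2-1) = Γ.PP (m+1) := rfl
      rw [hP2, mul_add, hAm, hIH, hP3, hPm1]
      have e1 : Γ.b (m+1) • Γ.Amat (m+1)
            + Γ.b (m+1) • (if m = 0 then (0:Matrix α α ℂ) else Γ.PP (m-1))
          = Γ.b (m+1) • Γ.PP (m+1) := by
        rw [← smul_add, hMP]
      calc Γ.c (m+2+1) • Γ.Amat (m+2+1) + Γ.b (m+1) • Γ.Amat (m+1)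
            + (Γ.b (m+1) • (if m = 0 then (0:Matrix α α ℂ) else Γ.PP (m-1))
              + Γ.c (m+1) • Γ.PP (m+1))
          = Γ.c (m+2+1) • Γ.Amat (m+2+1)
            + ((Γ.b (m+1) • Γ.Amat (m+1)
              + Γ.b (m+1) • (if m = 0 then (0:Matrix α α ℂ) else Γ.PP (m-1)))
              + Γ.c (m+1) • Γ.PP (m+1)) := by abel
        _ = Γ.c (m+2+1) • Γ.Amat (m+2+1)
            + (Γ.b (m+1) • Γ.PP (m+1) + Γ.c (m+1) • Γ.PP (m+1)) := by rw [e1]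
        _ = Γ.c (m+2+1) • Γ.Amat (m+2+1) + Γ.k • Γ.PP (m+1) := by
              rw [← add_smul, hbc1]
        _ = Γ.c (m+2+1) • Γ.Amat (m+2+1)
            + (Γ.b (m+2+1) + Γ.c (m+2+1)) • Γ.PP (m+1) := by rw [hbc3]
        _ = Γ.b (m+2+1) • Γ.PP (m+1)
            + Γ.c (m+2+1) • (Γ.Amat (m+2+1) + Γ.PP (m+1)) := by
              rw [add_smul, smul_add]; abel

lemma trace_Amat_mul (a b : ℕ) (ha : a ≤ Γ.D) :
    (Γ.Amat a * Γ.Amat b).trace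
      = if a = b then ((Fintype.card α * Γ.p 0 a a : ℕ) : ℂ) else 0 := by
  rw [Matrix.trace]
  have hdiag : ∀ x : α, (Γ.Amat a * Γ.Amat b).diag x
      = ((Finset.univ.filter fun z => Γ.G.dist x z = a ∧ Γ.G.dist z x = b).card : ℂ) := by
    intro x
    rw [Matrix.diag_apply, Matrix.mul_apply]
    have : ∀ z : α, Γ.Amat a x z * Γ.Amat b z x
        = if Γ.G.dist x z = a ∧ Γ.G.dist z x = b then (1:ℂ) else 0 := by
      intro z
      rw [Amat_apply, Amat_apply, ite_and]
      split <;> split <;> simp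
    simp_rw [this]
    rw [Finset.sum_boole]
  simp_rw [hdiag]
  by_cases hab : a = b
  · subst hab
    rw [if_pos rfl]
    have : ∀ x : α, ((Finset.univ.filter fun z =>
        Γ.G.dist x z = a ∧ Γ.G.dist z x = a).card : ℂ) = ((Γ.p 0 a a : ℕ) : ℂ) := by
      intro x
      have h := Γ.countEq x x a a ha ha
      rw [(Γ.dist_zero_iff x x).mpr rfl] at h
      rw [h]
    simp_rw [this]
    rw [Finset.sum_const, Finset.card_univ]
    push_cast
    ring
  · rw [if_neg hab]
    have : ∀ x : α, ((Finset.univ.filter fun z =>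
        Γ.G.dist x z = a ∧ Γ.G.dist z x = b).card : ℂ) = 0 := by
      intro x
      norm_cast
      rw [Finset.card_eq_zero, Finset.filter_eq_empty_iff]
      intro z _
      rintro ⟨h1, h2⟩
      rw [SimpleGraph.dist_comm] at h2
      exact hab (h1 ▸ h2 ▸ rfl)
    simp_rw [this]
    rw [Finset.sum_const, smul_zero]

/-- The scalar `W_{rs} = Σ_h k_h` over common even-offset indices. -/
def Wq (r s : ℕ) : ℝ :=
  ∑ h ∈ Finset.range (Γ.D + 1),
    if h ≤ r ∧ h ≤ s ∧ (r - h) % 2 = 0 ∧ (s - h) % 2 = 0 then Γ.kv h else 0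

lemma trace_PP_mul (r s : ℕ) (hr : r ≤ Γ.D) (hs : s ≤ Γ.D) :
    (Γ.PP r * Γ.PP s).trace = (((Fintype.card α : ℝ) * Γ.Wq r s : ℝ) : ℂ) := by
  rw [BDRG.PP, BDRG.PP, Finset.sum_mul_sum, Matrix.trace_sum]
  simp_rw [Matrix.trace_sum]
  have key : ∀ a ∈ Finset.range (r+1), ∀ b ∈ Finset.range (s+1),
      ((if (r - a) % 2 = 0 then Γ.Amat a else 0) * (if (s - b) % 2 = 0 then Γ.Amat b else 0)).trace
      = if b = a then (if (r - a) % 2 = 0 ∧ (s - a) % 2 = 0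
          then ((Fintype.card α * Γ.p 0 a a : ℕ) : ℂ) else 0) else 0 := by
    intro a ha b hb
    rw [Finset.mem_range] at ha hb
    by_cases h1 : (r - a) % 2 = 0 <;> by_cases h2 : (s - b) % 2 = 0
    · rw [if_pos h1, if_pos h2, Γ.trace_Amat_mul a b (by omega)]
      by_cases hab : b = a
      · subst hab
        rw [if_pos rfl, if_pos rfl, if_pos ⟨h1, h2⟩]
      · rw [if_neg (fun hh => hab hh.symm), if_neg hab]
    · rw [if_pos h1, if_neg h2, mul_zero, Matrix.trace_zero]
      by_cases hab : b = a
      · subst hab; rw [if_pos rfl, if_neg (fun hh => h2 hh.2)]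
      · rw [if_neg hab]
    · rw [if_neg h1, if_pos h2, zero_mul, Matrix.trace_zero]
      by_cases hab : b = a
      · subst hab; rw [if_pos rfl, if_neg (fun hh => h1 hh.1)]
      · rw [if_neg hab]
    · rw [if_neg h1, zero_mul, Matrix.trace_zero]
      by_cases hab : b = a
      · subst hab; rw [if_pos rfl, if_neg (fun hh => h1 hh.1)]
      · rw [if_neg hab]
  rw [Finset.sum_congr rfl (fun a ha => Finset.sum_congr rfl (fun b hb => key a ha b hb))]
  have hinner : ∀ a ∈ Finset.range (r+1),
      (∑ b ∈ Finset.range (s+1), if b = a then (if (r - a) % 2 = 0 ∧ (s - a) % 2 = 0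
          then ((Fintype.card α * Γ.p 0 a a : ℕ) : ℂ) else 0) else 0)
      = if a ∈ Finset.range (s+1) then (if (r - a) % 2 = 0 ∧ (s - a) % 2 = 0
          then ((Fintype.card α * Γ.p 0 a a : ℕ) : ℂ) else 0) else 0 := by
    intro a _
    exact Finset.sum_ite_eq' _ _ _
  rw [Finset.sum_congr rfl hinner]
  have hW : (((Fintype.card α : ℝ) * Γ.Wq r s : ℝ) : ℂ)
      = ∑ h ∈ Finset.range (Γ.D+1),
          if h ≤ r ∧ h ≤ s ∧ (r - h) % 2 = 0 ∧ (s - h) % 2 = 0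
          then ((Fintype.card α * Γ.p 0 h h : ℕ) : ℂ) else 0 := by
    rw [BDRG.Wq, Finset.mul_sum, Complex.ofReal_sum]
    refine Finset.sum_congr rfl fun h hh => ?_
    split
    · show (((Fintype.card α : ℝ) * Γ.kv h : ℝ) : ℂ) = _
      rw [BDRG.kv]
      push_cast
      ring
    · simp
  rw [hW]
  have hcong : ∀ a ∈ Finset.range (r+1),
      (if a ∈ Finset.range (s+1) then (if (r - a) % 2 = 0 ∧ (s - a) % 2 = 0
          then ((Fintype.card α * Γ.p 0 a a : ℕ) : ℂ) else 0) else 0)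
      = if a ≤ r ∧ a ≤ s ∧ (r - a) % 2 = 0 ∧ (s - a) % 2 = 0
          then ((Fintype.card α * Γ.p 0 a a : ℕ) : ℂ) else 0 := by
    intro a ha
    rw [Finset.mem_range] at ha
    by_cases h1 : a ≤ s
    · rw [if_pos (Finset.mem_range.mpr (by omega))]
      by_cases h2 : (r - a) % 2 = 0 ∧ (s - a) % 2 = 0
      · rw [if_pos h2, if_pos ⟨by omega, h1, h2⟩]
      · rw [if_neg h2, if_neg (fun hh => h2 ⟨hh.2.2.1, hh.2.2.2⟩)]
    · have hm : a ∉ Finset.range (s+1) := by rw [Finset.mem_range]; omega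
      rw [if_neg hm, if_neg (fun hh => h1 hh.2.1)]
  refine Eq.trans (Finset.sum_congr rfl hcong) ?_
  refine Finset.sum_subset (Finset.range_subset_range.mpr (by omega)) ?_
  intro a _ ha
  rw [Finset.mem_range, not_lt] at ha
  rw [if_neg (fun hh => by omega)]

def Tq (r : ℕ) : ℝ := Γ.Wq r r

lemma Wq_symm (r s : ℕ) : Γ.Wq r s = Γ.Wq s r := by
  rw [BDRG.Wq, BDRG.Wq]
  refine Finset.sum_congr rfl fun h _ => ?_
  refine if_congr ?_ rfl rfl
  tauto

lemma Wq_eval (r s : ℕ) (hrs : r ≤ s) (hpar : (s - r) % 2 = 0) : Γ.Wq r s = Γ.Tq r := by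
  rw [BDRG.Tq, BDRG.Wq, BDRG.Wq]
  refine Finset.sum_congr rfl fun h _ => ?_
  refine if_congr ?_ rfl rfl
  constructor <;> intro hh <;> refine ⟨hh.1, ?_, ?_, ?_⟩ <;> omega

lemma Wq_odd (r s : ℕ) (hpar : (r + s) % 2 = 1) : Γ.Wq r s = 0 := by
  rw [BDRG.Wq]
  refine Finset.sum_eq_zero fun h _ => ?_
  rw [if_neg]
  intro hh
  omega

lemma kv_nonneg (i : ℕ) : 0 ≤ Γ.kv i := by
  rw [BDRG.kv]; positivity

lemma Tq_zero : Γ.Tq 0 = 1 := by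
  rw [BDRG.Tq, BDRG.Wq]
  rw [Finset.sum_eq_single 0]
  · rw [if_pos ⟨le_rfl, le_rfl, rfl, rfl⟩, Γ.kv0]
  · intro h _ hne
    rw [if_neg (fun hh => hne (by omega))]
  · intro habs
    exact absurd (Finset.mem_range.mpr (by omega)) habs

lemma Tq_one : Γ.Tq 1 = Γ.k := by
  rw [BDRG.Tq, BDRG.Wq]
  rw [Finset.sum_eq_single 1]
  · rw [if_pos ⟨le_rfl, le_rfl, rfl, rfl⟩, Γ.kv1]
  · intro h _ hne
    rw [if_neg (fun hh => hne (by omega))]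
  · intro habs
    have := Γ.D1
    exact absurd (Finset.mem_range.mpr (by omega)) habs

lemma Tq_succ (r : ℕ) (hr : r + 2 ≤ Γ.D) : Γ.Tq (r+2) = Γ.Tq r + Γ.kv (r+2) := by
  rw [BDRG.Tq, BDRG.Tq, BDRG.Wq, BDRG.Wq]
  have hsplit : ∀ h ∈ Finset.range (Γ.D + 1),
      (if h ≤ r + 2 ∧ h ≤ r + 2 ∧ (r + 2 - h) % 2 = 0 ∧ (r + 2 - h) % 2 = 0
        then Γ.kv h else 0)
      = (if h ≤ r ∧ h ≤ r ∧ (r - h) % 2 = 0 ∧ (r - h) % 2 = 0 then Γ.kv h else 0)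
        + (if h = r + 2 then Γ.kv h else 0) := by
    intro h _
    by_cases he : h = r + 2
    · rw [if_pos he, if_pos (by omega), if_neg (by omega)]
      ring
    · rw [if_neg he, add_zero]
      refine if_congr ?_ rfl rfl
      constructor <;> intro hh <;> refine ⟨?_, ?_, ?_, ?_⟩ <;> omega
  rw [Finset.sum_congr rfl hsplit, Finset.sum_add_distrib]
  congr 1
  rw [Finset.sum_ite_eq' (Finset.range (Γ.D+1)) (r+2) (fun h => Γ.kv h)]
  rw [if_pos (Finset.mem_range.mpr (by omega))]

/-- The key recurrence `k T_i = k T_{i-1} + k_i b_i`. -/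
lemma kT (i : ℕ) (h1 : 1 ≤ i) (h2 : i ≤ Γ.D - 1) :
    Γ.k * Γ.Tq i = Γ.k * Γ.Tq (i-1) + Γ.kv i * Γ.b i := by
  have hD := Γ.hD
  induction i with
  | zero => omega
  | succ n ih =>
    match n, ih with
    | 0, _ =>
      rw [Γ.Tq_one, show (1:ℕ) - 1 = 0 from rfl, Γ.Tq_zero, Γ.kv1]
      have hbc := Γ.bc_sum 1 le_rfl (by omega)
      have hc1 := Γ.c1_eq
      linear_combination (-Γ.k) * hbc + Γ.k * hc1
    | (n+1), ih =>
      have ihh := ih (by omega) (by omega)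
      have hts : Γ.Tq (n+2) = Γ.Tq n + Γ.kv (n+2) := Γ.Tq_succ n (by omega)
      have hcb : Γ.kv (n+2) * Γ.c (n+2) = Γ.kv (n+2-1) * Γ.b (n+2-1) := by
        exact Γ.kvcb (n+2) (by omega) (by omega)
      have hbc : Γ.c (n+2) + Γ.b (n+2) = Γ.k := Γ.bc_sum (n+2) (by omega) (by omega)
      have e1 : (n + 2 - 1 : ℕ) = n + 1 := rfl
      have e2 : (n + 1 - 1 : ℕ) = n := rfl
      rw [e1] at hcb
      rw [e2] at ihh
      rw [show (n + 1 + 1 : ℕ) = n + 2 from rfl, e1, hts]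
      linear_combination (-1 : ℝ) * ihh + hcb - Γ.kv (n+2) * hbc

end BDRG

section SpecAux
variable {n : Type} [Fintype n] [DecidableEq n] {A : Matrix n n ℂ} (hA : A.IsHermitian)

private def bas (hA : A.IsHermitian) : Module.Basis n ℂ (n → ℂ) :=
  hA.eigenvectorBasis.toBasis.map (WithLp.linearEquiv 2 ℂ (n → ℂ))

lemma bas_apply (j : n) : bas hA j = ⇑(hA.eigenvectorBasis j) := by
  simp [bas, Module.Basis.map_apply]

lemma bas_eig (j : n) :
    A.mulVecLin (bas hA j) = (hA.eigenvalues j : ℂ) • bas hA j := by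
  rw [bas_apply, Matrix.mulVecLin_apply, hA.mulVec_eigenvectorBasis]
  ext x
  simp [Complex.real_smul]

lemma trace_pow (nn : ℕ) : ((A ^ nn).trace) = ∑ j, (hA.eigenvalues j : ℂ) ^ nn := by
  have hU1 : (hA.eigenvectorUnitary : Matrix n n ℂ) * (star hA.eigenvectorUnitary : Matrix n n ℂ) = 1 :=
    Unitary.coe_mul_star_self _
  have hU2 : (star hA.eigenvectorUnitary : Matrix n n ℂ) * (hA.eigenvectorUnitary : Matrix n n ℂ) = 1 :=
    Unitary.coe_star_mul_self _
  have key : ∀ X Y : Matrix n n ℂ,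
      ((hA.eigenvectorUnitary : Matrix n n ℂ) * X * (star hA.eigenvectorUnitary : Matrix n n ℂ))
        * ((hA.eigenvectorUnitary : Matrix n n ℂ) * Y * (star hA.eigenvectorUnitary : Matrix n n ℂ))
      = (hA.eigenvectorUnitary : Matrix n n ℂ) * (X * Y) * (star hA.eigenvectorUnitary : Matrix n n ℂ) := by
    intro X Y
    calc ((hA.eigenvectorUnitary : Matrix n n ℂ) * X * (star hA.eigenvectorUnitary : Matrix n n ℂ))
        * ((hA.eigenvectorUnitary : Matrix n n ℂ) * Y * (star hA.eigenvectorUnitary : Matrix n n ℂ))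
        = (hA.eigenvectorUnitary : Matrix n n ℂ) * (X *
            (((star hA.eigenvectorUnitary : Matrix n n ℂ) * (hA.eigenvectorUnitary : Matrix n n ℂ)) *
              (Y * (star hA.eigenvectorUnitary : Matrix n n ℂ)))) := by
          simp only [Matrix.mul_assoc]
      _ = _ := by
          rw [hU2, Matrix.one_mul]
          simp only [Matrix.mul_assoc]
  have hpow : A ^ nn = (hA.eigenvectorUnitary : Matrix n n ℂ)
      * (Matrix.diagonal (RCLike.ofReal ∘ hA.eigenvalues)) ^ nn
      * (star hA.eigenvectorUnitary : Matrix n n ℂ) := by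
    induction nn with
    | zero => simp [hU1]
    | succ m ih =>
      rw [pow_succ, ih, pow_succ, ← key]; congr 1; exact hA.spectral_theorem
  rw [hpow, Matrix.mul_assoc, Matrix.trace_mul_comm, Matrix.mul_assoc, hU2, Matrix.mul_one,
    Matrix.diagonal_pow, Matrix.trace_diagonal]
  simp

lemma trace_aeval (q : Polynomial ℝ) :
    (Polynomial.aeval A q).trace = ((∑ j, q.eval (hA.eigenvalues j) : ℝ) : ℂ) := by
  rw [Polynomial.aeval_eq_sum_range, Matrix.trace_sum]
  have : ∀ i ∈ Finset.range (q.natDegree + 1),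
      (q.coeff i • A ^ i).trace = ∑ j, ((q.coeff i * (hA.eigenvalues j) ^ i : ℝ) : ℂ) := by
    intro i _
    rw [Matrix.trace_smul, trace_pow hA i, Finset.smul_sum]
    refine Finset.sum_congr rfl fun j _ => ?_
    rw [Complex.real_smul]
    push_cast
    ring
  rw [Finset.sum_congr rfl this, Finset.sum_comm]
  rw [Complex.ofReal_sum]
  refine Finset.sum_congr rfl fun j _ => ?_
  rw [Polynomial.eval_eq_sum_range]
  push_cast
  ring

lemma eigenspace_eq_span (μ : n → ℂ) (T : Module.End ℂ (n → ℂ)) (bb : Module.Basis n ℂ (n → ℂ))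
    (hT : ∀ j, T (bb j) = μ j • bb j) (t : ℂ) :
    Module.End.eigenspace T t = Submodule.span ℂ (bb '' {j | μ j = t}) := by
  apply le_antisymm
  · intro v hv
    have hv' : T v = t • v := Module.End.mem_eigenspace_iff.mp hv
    have hrep : ∀ j, μ j ≠ t → bb.repr v j = 0 := by
      intro j hj
      have h1 : T v = ∑ i, (bb.repr v i * μ i) • bb i := by
        conv_lhs => rw [← bb.sum_repr v]
        rw [map_sum]
        refine Finset.sum_congr rfl fun i _ => ?_
        rw [LinearMap.map_smul, hT i, smul_smul]
      have h2 : T v = ∑ i, (t * bb.repr v i) • bb i := by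
        rw [hv']
        conv_lhs => rw [← bb.sum_repr v]
        rw [Finset.smul_sum]
        refine Finset.sum_congr rfl fun i _ => ?_
        rw [smul_smul]
      have h0 := h1.symm.trans h2
      have e1 := bb.repr_sum_self (fun i => bb.repr v i * μ i)
      have e2 := bb.repr_sum_self (fun i => t * bb.repr v i)
      have h3 := congrFun (congrArg (fun w => ⇑(bb.repr w)) h0) j
      have k1 := congrFun e1 j
      have k2 := congrFun e2 j
      have hmain : bb.repr v j * μ j = t * bb.repr v j := by
        rw [← k1, ← k2]; exact h3
      have hfac : bb.repr v j * (μ j - t) = 0 := by linear_combination hmain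
      rcases mul_eq_zero.mp hfac with h | h
      · exact h
      · exact absurd (by linear_combination h) hj
    -- now v is in the span
    have hmem : (∑ i, bb.repr v i • bb i) ∈ Submodule.span ℂ (⇑bb '' {j | μ j = t}) := by
      refine Submodule.sum_mem _ fun j _ => ?_
      by_cases hj : μ j = t
      · exact Submodule.smul_mem _ _ (Submodule.subset_span ⟨j, hj, rfl⟩)
      · rw [hrep j hj, zero_smul]
        exact Submodule.zero_mem _
    rwa [bb.sum_repr v] at hmem
  · rw [Submodule.span_le]
    rintro w ⟨j, hj, rfl⟩
    rw [SetLike.mem_coe, Module.End.mem_eigenspace_iff, hT j, hj]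

lemma finrank_eigenspace_eq (μ : n → ℂ) (T : Module.End ℂ (n → ℂ)) (bb : Module.Basis n ℂ (n → ℂ))
    (hT : ∀ j, T (bb j) = μ j • bb j) (t : ℂ) :
    Module.finrank ℂ (Module.End.eigenspace T t) = Fintype.card {j // μ j = t} := by
  rw [eigenspace_eq_span μ T bb hT t]
  have hli : LinearIndependent ℂ (fun j : {j // μ j = t} => bb j) :=
    bb.linearIndependent.comp _ Subtype.val_injective
  have himg : ⇑bb '' {j | μ j = t} = Set.range (fun j : {j // μ j = t} => bb j) :=
    Set.image_eq_range _ _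
  rw [himg, finrank_span_eq_card hli]

end SpecAux

namespace BDRG

variable {α : Type} [Fintype α] [DecidableEq α] (Γ : BDRG α)

lemma hermA : (Γ.Amat 1).IsHermitian := by
  rw [Matrix.IsHermitian]
  ext x y
  rw [Matrix.conjTranspose_apply, Amat_apply, Amat_apply, SimpleGraph.dist_comm]
  split <;> simp

lemma theta_inj (θ : ℕ → ℝ) (hθ : Γ.IsEigenvalueSeq θ) (a b : ℕ) (ha : a ≤ Γ.D)
    (hb : b ≤ Γ.D) (hab : θ a = θ b) : a = b := by
  rcases lt_trichotomy a b with h | h | h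
  · exact absurd hab (ne_of_gt (hθ.2.1 a b h hb))
  · exact h
  · exact absurd hab (ne_of_lt (hθ.2.1 b a h ha))

/-- Every `Γ`-eigenvalue occurring in the spectral decomposition of `A` equals some `θ h`. -/
lemma ev_exists (θ : ℕ → ℝ) (hθ : Γ.IsEigenvalueSeq θ) (j : α) :
    ∃ h ≤ Γ.D, Γ.hermA.eigenvalues j = θ h := by
  have hv : (Γ.Amat 1).mulVecLin (bas Γ.hermA j) = ((Γ.hermA.eigenvalues j : ℝ) : ℂ) • bas Γ.hermA j :=
    bas_eig Γ.hermA j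
  have hne : bas Γ.hermA j ≠ 0 := Module.Basis.ne_zero _ j
  have heig : Module.End.HasEigenvalue ((Γ.Amat 1).mulVecLin) ((Γ.hermA.eigenvalues j : ℝ) : ℂ) := by
    exact Module.End.hasEigenvalue_of_hasEigenvector
      ⟨Module.End.mem_eigenspace_iff.mpr hv, hne⟩
  obtain ⟨h, hh, hval⟩ := hθ.2.2.2 _ heig
  exact ⟨h, hh, by exact_mod_cast hval⟩

lemma m_eq_card (t : ℝ) :
    Γ.m t = (Finset.univ.filter fun j : α => Γ.hermA.eigenvalues j = t).card := by
  rw [BDRG.m, finrank_eigenspace_eq (fun j => ((Γ.hermA.eigenvalues j : ℝ) : ℂ))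
      ((Γ.Amat 1).mulVecLin) (bas Γ.hermA) (fun j => bas_eig Γ.hermA j) ((t : ℝ) : ℂ)]
  rw [Fintype.card_subtype]
  congr 1
  ext j
  simp [Complex.ofReal_inj]

/-- The spectral summation formula: `Σ_h q(θ_h) m_h = tr q(A)`. -/
lemma sum_spec (θ : ℕ → ℝ) (hθ : Γ.IsEigenvalueSeq θ) (q : Polynomial ℝ) :
    ((∑ h ∈ Finset.range (Γ.D + 1), q.eval (θ h) * (Γ.m (θ h) : ℝ) : ℝ) : ℂ)
      = (Polynomial.aeval (Γ.Amat 1) q).trace := by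
  rw [trace_aeval Γ.hermA q]
  congr 1
  -- a real identity
  have idx : ∀ j : α, ∃ h, h ≤ Γ.D ∧ Γ.hermA.eigenvalues j = θ h := by
    intro j
    obtain ⟨h, hh, he⟩ := Γ.ev_exists θ hθ j
    exact ⟨h, hh, he⟩
  choose f hf1 hf2 using idx
  have hmaps : ∀ j : α, j ∈ Finset.univ → f j ∈ Finset.range (Γ.D + 1) := by
    intro j _
    rw [Finset.mem_range]
    exact Nat.lt_succ_of_le (hf1 j)
  rw [← Finset.sum_fiberwise_of_maps_to hmaps (fun j => q.eval (Γ.hermA.eigenvalues j))]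
  refine Finset.sum_congr rfl fun h hh => ?_
  rw [Finset.mem_range] at hh
  have hfib : ∀ j ∈ Finset.univ.filter (fun j => f j = h),
      q.eval (Γ.hermA.eigenvalues j) = q.eval (θ h) := by
    intro j hj
    rw [Finset.mem_filter] at hj
    rw [hf2 j, hj.2]
  rw [Finset.sum_congr rfl hfib, Finset.sum_const]
  have hcount : (Finset.univ.filter fun j => f j = h).card = Γ.m (θ h) := by
    rw [Γ.m_eq_card (θ h)]
    congr 1
    ext j
    simp only [Finset.mem_filter, Finset.mem_univ, true_and]
    constructor
    · intro hfj
      rw [hf2 j, hfj]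
    · intro hev
      exact Γ.theta_inj θ hθ (f j) h (hf1 j) (by omega) (by rw [← hf2 j, hev])
  rw [hcount]
  push_cast
  ring

/-- Applying a polynomial in `A` to an eigenvector. -/
lemma aeval_mulVec (v : α → ℂ) (t : ℝ) (hv : Γ.Amat 1 *ᵥ v = ((t : ℝ) : ℂ) • v)
    (q : Polynomial ℝ) :
    (Polynomial.aeval (Γ.Amat 1) q) *ᵥ v = ((q.eval t : ℝ) : ℂ) • v := by
  have hpow : ∀ nn : ℕ, (Γ.Amat 1) ^ nn *ᵥ v = (((t : ℝ) : ℂ)) ^ nn • v := by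
    intro nn
    induction nn with
    | zero => simp
    | succ m ih =>
      rw [pow_succ, ← Matrix.mulVec_mulVec, hv, Matrix.mulVec_smul, ih, smul_smul, pow_succ]
      ring_nf
  have hsum : ∀ (s : Finset ℕ) (F : ℕ → Matrix α α ℂ),
      (∑ i ∈ s, F i) *ᵥ v = ∑ i ∈ s, (F i *ᵥ v) := by
    intro s F
    induction s using Finset.induction with
    | empty => simp [Matrix.zero_mulVec]
    | insert x s hx ih =>
      rw [Finset.sum_insert hx, Finset.sum_insert hx, Matrix.add_mulVec, ih]
  rw [Polynomial.aeval_eq_sum_range, hsum]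
  have : ∀ i ∈ Finset.range (q.natDegree + 1),
      (q.coeff i • (Γ.Amat 1) ^ i) *ᵥ v = ((q.coeff i * t ^ i : ℝ) : ℂ) • v := by
    intro i _
    rw [real_smul_mat, Matrix.smul_mulVec, hpow i, smul_smul]
    norm_cast
  rw [Finset.sum_congr rfl this, ← Finset.sum_smul]
  congr 1
  rw [Polynomial.eval_eq_sum_range]
  push_cast
  ring

/-- Eigenvalues of `A` are at most `k` in absolute value. -/
lemma eig_bound (t : ℝ) (ht : Module.End.HasEigenvalue ((Γ.Amat 1).mulVecLin) ((t : ℝ) : ℂ)) :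
    |t| ≤ Γ.k := by
  obtain ⟨v, hv⟩ := ht.exists_hasEigenvector
  have hv0 : v ≠ 0 := hv.2
  have hveq : Γ.Amat 1 *ᵥ v = ((t : ℝ) : ℂ) • v := by
    have := Module.End.mem_eigenspace_iff.mp hv.1
    rwa [Matrix.mulVecLin_apply] at this
  obtain ⟨x1⟩ := Γ.hconn.nonempty
  obtain ⟨x0, -, hx0⟩ := Finset.exists_max_image Finset.univ (fun y => ‖v y‖)
    ⟨x1, Finset.mem_univ _⟩
  have hx0pos : 0 < ‖v x0‖ := by
    obtain ⟨y, hy⟩ := Function.ne_iff.mp hv0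
    have hy' : 0 < ‖v y‖ := norm_pos_iff.mpr (by simpa using hy)
    exact lt_of_lt_of_le hy' (hx0 y (Finset.mem_univ y))
  have hent : (Γ.Amat 1 *ᵥ v) x0 = ((t : ℝ) : ℂ) * v x0 := by
    rw [hveq]; simp
  have habs : |t| * ‖v x0‖ ≤ Γ.k * ‖v x0‖ := by
    have h1 : ‖((t : ℝ) : ℂ) * v x0‖ = |t| * ‖v x0‖ := by
      rw [norm_mul, Complex.norm_real, Real.norm_eq_abs]
    rw [← h1, ← hent]
    have h2 : (Γ.Amat 1 *ᵥ v) x0 = ∑ y, (if Γ.G.dist x0 y = 1 then (1:ℂ) else 0) * v y := by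
      rw [Matrix.mulVec]
      rfl
    rw [h2]
    calc ‖∑ y, (if Γ.G.dist x0 y = 1 then (1:ℂ) else 0) * v y‖
        ≤ ∑ y, ‖(if Γ.G.dist x0 y = 1 then (1:ℂ) else 0) * v y‖ :=
          norm_sum_le _ _
      _ ≤ ∑ y, (if Γ.G.dist x0 y = 1 then ‖v x0‖ else 0) := by
          refine Finset.sum_le_sum fun y _ => ?_
          by_cases hy : Γ.G.dist x0 y = 1
          · rw [if_pos hy, if_pos hy, one_mul]
            exact hx0 y (Finset.mem_univ y)
          · rw [if_neg hy, if_neg hy, zero_mul, norm_zero]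
      _ = Γ.k * ‖v x0‖ := by
          have hfac : ∀ y : α, (if Γ.G.dist x0 y = 1 then ‖v x0‖ else 0)
              = (if Γ.G.dist x0 y = 1 then (1:ℝ) else 0) * ‖v x0‖ := by
            intro y; split <;> simp
          simp_rw [hfac]
          rw [← Finset.sum_mul, Finset.sum_boole, Γ.deg_card x0, Γ.k_eq]
  exact le_of_mul_le_mul_right habs hx0pos

end BDRG

namespace BDRG

variable {α : Type} [Fintype α] [DecidableEq α] (Γ : BDRG α)

lemma smul_mul_smul_mat (r s : ℝ) (X Y : Matrix α α ℂ) :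
    (r • X) * (s • Y) = (r * s) • (X * Y) := by
  rw [smul_mul_assoc, mul_smul_comm, smul_smul]

/-- The scalar heart of the orthogonality computation. -/
lemma scalarG (i j : ℕ) (hi : i ≤ Γ.D - 2) (hj : j ≤ Γ.D - 2) :
    Γ.k^2 * Γ.Wq i j
      - (Γ.b (i+1) * Γ.b (j+1) * (if i = 0 then 0 else if j = 0 then 0 else Γ.Wq (i-1) (j-1))
        + Γ.b (i+1) * Γ.c (j+1) * (if i = 0 then 0 else Γ.Wq (i-1) (j+1))
        + Γ.c (i+1) * Γ.b (j+1) * (if j = 0 then 0 else Γ.Wq (i+1) (j-1))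
        + Γ.c (i+1) * Γ.c (j+1) * Γ.Wq (i+1) (j+1))
      = if i = j then Γ.kv i * Γ.b i * Γ.b (i+1) else 0 := by
  have hD := Γ.hD
  -- the strictly-increasing same-parity case
  have hlt : ∀ a b : ℕ, a ≤ Γ.D - 2 → b ≤ Γ.D - 2 → a < b → (a + b) % 2 = 0 →
      Γ.k^2 * Γ.Wq a b
      - (Γ.b (a+1) * Γ.b (b+1) * (if a = 0 then 0 else if b = 0 then 0 else Γ.Wq (a-1) (b-1))
        + Γ.b (a+1) * Γ.c (b+1) * (if a = 0 then 0 else Γ.Wq (a-1) (b+1))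
        + Γ.c (a+1) * Γ.b (b+1) * (if b = 0 then 0 else Γ.Wq (a+1) (b-1))
        + Γ.c (a+1) * Γ.c (b+1) * Γ.Wq (a+1) (b+1)) = 0 := by
    intro a b ha hb hab hpar
    have hab2 : a + 2 ≤ b := by omega
    have hW : Γ.Wq a b = Γ.Tq a := Γ.Wq_eval a b (by omega) (by omega)
    have hW4 : Γ.Wq (a+1) (b+1) = Γ.Tq (a+1) := Γ.Wq_eval (a+1) (b+1) (by omega) (by omega)
    have hU3' : Γ.Wq (a+1) (b-1) = Γ.Tq (a+1) := Γ.Wq_eval (a+1) (b-1) (by omega) (by omega)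
    have hU3 : (if b = 0 then (0:ℝ) else Γ.Wq (a+1) (b-1)) = Γ.Tq (a+1) := by
      rw [if_neg (by omega : ¬ b = 0), hU3']
    have hbcb : Γ.c (b+1) + Γ.b (b+1) = Γ.k := Γ.bc_sum (b+1) (by omega) (by omega)
    rw [hW, hW4, hU3]
    by_cases h0 : a = 0
    · subst h0
      rw [if_pos rfl, if_pos rfl, Γ.Tq_zero, Γ.Tq_one, Γ.c1_eq]
      linear_combination (-Γ.k) * hbcb
    · rw [if_neg h0, if_neg h0, if_neg (show ¬ b = 0 by omega)]
      have hV : Γ.Wq (a-1) (b-1) = Γ.Tq (a-1) := Γ.Wq_eval (a-1) (b-1) (by omega) (by omega)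
      have hU2 : Γ.Wq (a-1) (b+1) = Γ.Tq (a-1) := Γ.Wq_eval (a-1) (b+1) (by omega) (by omega)
      rw [hV, hU2]
      have R1 := Γ.kT a (by omega) (by omega)
      have R2 : Γ.k * Γ.Tq (a+1) = Γ.k * Γ.Tq a + Γ.kv (a+1) * Γ.b (a+1) := by
        have := Γ.kT (a+1) (by omega) (by omega)
        simpa using this
      have R3 : Γ.kv (a+1) * Γ.c (a+1) = Γ.kv a * Γ.b a := by
        have := Γ.kvcb (a+1) (by omega) (by omega)
        simpa using this
      have R5 : Γ.c (a+1) + Γ.b (a+1) = Γ.k := Γ.bc_sum (a+1) (by omega) (by omega)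
      linear_combination (-Γ.b (a+1) * Γ.Tq (a-1) - Γ.c (a+1) * Γ.Tq (a+1)) * hbcb
        + Γ.b (a+1) * R1 - Γ.c (a+1) * R2 - Γ.k * Γ.Tq a * R5 - Γ.b (a+1) * R3
  by_cases hpar : (i + j) % 2 = 1
  · rw [if_neg (by omega : ¬ i = j)]
    rw [Γ.Wq_odd i j hpar, Γ.Wq_odd (i+1) (j+1) (by omega)]
    have hV : (if i = 0 then (0:ℝ) else if j = 0 then 0 else Γ.Wq (i-1) (j-1)) = 0 := by
      split_ifs with h0 h1
      · rfl
      · rfl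
      · exact Γ.Wq_odd _ _ (by omega)
    have hU2 : (if i = 0 then (0:ℝ) else Γ.Wq (i-1) (j+1)) = 0 := by
      split_ifs with h0
      · rfl
      · exact Γ.Wq_odd _ _ (by omega)
    have hU3 : (if j = 0 then (0:ℝ) else Γ.Wq (i+1) (j-1)) = 0 := by
      split_ifs with h0
      · rfl
      · exact Γ.Wq_odd _ _ (by omega)
    rw [hV, hU2, hU3]
    ring
  · rcases lt_trichotomy i j with hij | rfl | hij
    · rw [if_neg (by omega : ¬ i = j)]
      exact hlt i j hi hj hij (by omega)
    · -- diagonal case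
      rw [if_pos rfl]
      have hW : Γ.Wq i i = Γ.Tq i := rfl
      have hW4 : Γ.Wq (i+1) (i+1) = Γ.Tq (i+1) := rfl
      rw [hW, hW4]
      by_cases h0 : i = 0
      · subst h0
        rw [if_pos rfl, if_pos rfl, if_pos rfl, Γ.Tq_zero, Γ.Tq_one, Γ.kv0, Γ.c1_eq,
          show Γ.b 0 = Γ.k from rfl]
        have hbc1 : Γ.c 1 + Γ.b 1 = Γ.k := Γ.bc_sum 1 (by omega) (by omega)
        have hc1 := Γ.c1_eq
        linear_combination (-Γ.k) * hbc1 + Γ.k * hc1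
      · rw [if_neg h0, if_neg h0, if_neg h0, if_neg h0]
        have hV : Γ.Wq (i-1) (i-1) = Γ.Tq (i-1) := rfl
        have hU2 : Γ.Wq (i-1) (i+1) = Γ.Tq (i-1) := Γ.Wq_eval (i-1) (i+1) (by omega) (by omega)
        have hU3 : Γ.Wq (i+1) (i-1) = Γ.Tq (i-1) := by
          rw [Γ.Wq_symm (i+1) (i-1)]
          exact hU2
        rw [hV, hU2, hU3]
        have hTrec : Γ.Tq (i+1) = Γ.Tq (i-1) + Γ.kv (i+1) := by
          have h := Γ.Tq_succ (i-1) (by omega)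
          have e : i - 1 + 2 = i + 1 := by omega
          rwa [e] at h
        have R1 := Γ.kT i (by omega) (by omega)
        have R3 : Γ.kv (i+1) * Γ.c (i+1) = Γ.kv i * Γ.b i := by
          have := Γ.kvcb (i+1) (by omega) (by omega)
          simpa using this
        have R5 : Γ.c (i+1) + Γ.b (i+1) = Γ.k := Γ.bc_sum (i+1) (by omega) (by omega)
        linear_combination (-Γ.c (i+1)^2) * hTrec + Γ.k * R1
          - (Γ.Tq (i-1) * (Γ.k + Γ.b (i+1) + Γ.c (i+1)) + Γ.kv i * Γ.b i) * R5
          - Γ.c (i+1) * R3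
    · -- j < i : use symmetry
      rw [if_neg (by omega : ¬ i = j)]
      have hsymm :
          Γ.k^2 * Γ.Wq i j
          - (Γ.b (i+1) * Γ.b (j+1) * (if i = 0 then 0 else if j = 0 then 0 else Γ.Wq (i-1) (j-1))
            + Γ.b (i+1) * Γ.c (j+1) * (if i = 0 then 0 else Γ.Wq (i-1) (j+1))
            + Γ.c (i+1) * Γ.b (j+1) * (if j = 0 then 0 else Γ.Wq (i+1) (j-1))
            + Γ.c (i+1) * Γ.c (j+1) * Γ.Wq (i+1) (j+1))
          = Γ.k^2 * Γ.Wq j i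
          - (Γ.b (j+1) * Γ.b (i+1) * (if j = 0 then 0 else if i = 0 then 0 else Γ.Wq (j-1) (i-1))
            + Γ.b (j+1) * Γ.c (i+1) * (if j = 0 then 0 else Γ.Wq (j-1) (i+1))
            + Γ.c (j+1) * Γ.b (i+1) * (if i = 0 then 0 else Γ.Wq (j+1) (i-1))
            + Γ.c (j+1) * Γ.c (i+1) * Γ.Wq (j+1) (i+1)) := by
        rw [Γ.Wq_symm i j, Γ.Wq_symm (i+1) (j+1)]
        rw [Γ.Wq_symm (i-1) (j-1), Γ.Wq_symm (i-1) (j+1), Γ.Wq_symm (i+1) (j-1)]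
        split_ifs <;> ring
      rw [hsymm]
      exact hlt j i hj hi hij (by omega)

end BDRG

namespace BDRG

variable {α : Type} [Fintype α] [DecidableEq α] (Γ : BDRG α)

lemma PP_sum_J : Γ.PP Γ.D + Γ.PP (Γ.D - 1) = ∑ r ∈ Finset.range (Γ.D + 1), Γ.Amat r := by
  have hD := Γ.hD
  rw [BDRG.PP, BDRG.PP]
  rw [Finset.sum_range_succ (fun h => if (Γ.D - h) % 2 = 0 then Γ.Amat h else 0)]
  rw [if_pos (by omega : (Γ.D - Γ.D) % 2 = 0)]
  have e : Γ.D - 1 + 1 = Γ.D := by omega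
  rw [e]
  rw [Finset.sum_range_succ (fun r => Γ.Amat r)]
  have hsum2 : (∑ h ∈ Finset.range Γ.D, if (Γ.D - h) % 2 = 0 then Γ.Amat h else 0)
      + (∑ h ∈ Finset.range Γ.D, if (Γ.D - 1 - h) % 2 = 0 then Γ.Amat h else 0)
      = ∑ h ∈ Finset.range Γ.D, Γ.Amat h := by
    rw [← Finset.sum_add_distrib]
    refine Finset.sum_congr rfl fun h hh => ?_
    rw [Finset.mem_range] at hh
    by_cases hp : (Γ.D - h) % 2 = 0
    · rw [if_pos hp, if_neg (by omega), add_zero]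
    · rw [if_neg hp, if_pos (by omega), zero_add]
  rw [add_right_comm, hsum2]

end BDRG


/-- orthogonality of the polynomials `p_i`. -/
theorem statement_1 {α : Type} [Fintype α] [DecidableEq α] (Γ : BDRG α)
    (θ : ℕ → ℝ) (hθ : Γ.IsEigenvalueSeq θ) :
    (∀ h : ℕ, 1 ≤ h → h ≤ Γ.D - 1 →
      (Γ.pp Γ.D).eval (θ h) = 0 ∧ (Γ.pp (Γ.D - 1)).eval (θ h) = 0) ∧
    ∀ i j : ℕ, i ≤ Γ.D - 2 → j ≤ Γ.D - 2 →
      ∑ h ∈ Finset.range (Γ.D + 1),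
          (Γ.pp i).eval (θ h) * (Γ.pp j).eval (θ h) * (Γ.k ^ 2 - (θ h) ^ 2) *
            (Γ.m (θ h) : ℝ) =
        if i = j then (Fintype.card α : ℝ) * Γ.kv i * Γ.b i * Γ.b (i + 1) else 0 := by
  have hD := Γ.hD
  constructor
  · -- Part 1
    intro h h1 h2
    have heig := hθ.2.2.1 h (by omega)
    obtain ⟨v, hv⟩ := heig.exists_hasEigenvector
    have hveq : Γ.Amat 1 *ᵥ v = ((θ h : ℝ) : ℂ) • v := by
      have := Module.End.mem_eigenspace_iff.mp hv.1
      rwa [Matrix.mulVecLin_apply] at this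
    have hv0 : v ≠ 0 := hv.2
    set s1 := (Γ.pp Γ.D).eval (θ h) with hs1
    set s2 := (Γ.pp (Γ.D - 1)).eval (θ h) with hs2
    have hP1 : Γ.PP Γ.D *ᵥ v = ((s1 : ℝ) : ℂ) • v := by
      rw [← Γ.aeval_pp Γ.D le_rfl]
      exact Γ.aeval_mulVec v (θ h) hveq _
    have hP2 : Γ.PP (Γ.D - 1) *ᵥ v = ((s2 : ℝ) : ℂ) • v := by
      rw [← Γ.aeval_pp (Γ.D - 1) (by omega)]
      exact Γ.aeval_mulVec v (θ h) hveq _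
    -- the sum of coordinates of v vanishes
    have hsumv : ∑ y, v y = 0 := by
      have hcol : ∀ y : α, (∑ x, (if Γ.G.dist x y = 1 then (1:ℂ) else 0))
          = ((Γ.p 0 1 1 : ℕ) : ℂ) := by
        intro y
        rw [Finset.sum_boole]
        norm_cast
        have hfe : (Finset.univ.filter fun x => Γ.G.dist x y = 1)
            = (Finset.univ.filter fun x => Γ.G.dist y x = 1) := by
          ext z
          simp only [Finset.mem_filter, Finset.mem_univ, true_and]
          rw [SimpleGraph.dist_comm]
        rw [hfe, Γ.deg_card y]
      have h1' : ∑ x, (Γ.Amat 1 *ᵥ v) x = ((Γ.p 0 1 1 : ℕ) : ℂ) * ∑ y, v y := by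
        have hmv : ∀ x : α, (Γ.Amat 1 *ᵥ v) x
            = ∑ y, (if Γ.G.dist x y = 1 then (1:ℂ) else 0) * v y := by
          intro x
          rw [Matrix.mulVec, dotProduct]
          rfl
        simp_rw [hmv]
        rw [Finset.sum_comm, Finset.mul_sum]
        refine Finset.sum_congr rfl fun y _ => ?_
        rw [← Finset.sum_mul, hcol y]
      have h2' : ∑ x, (Γ.Amat 1 *ᵥ v) x = ((θ h : ℝ) : ℂ) * ∑ y, v y := by
        rw [hveq, Finset.mul_sum]
        refine Finset.sum_congr rfl fun y _ => ?_
        simp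
      have hkθ : ((Γ.p 0 1 1 : ℕ) : ℂ) ≠ ((θ h : ℝ) : ℂ) := by
        have hlt : θ h < θ 0 := hθ.2.1 0 h h1 (by omega)
        have hk0 : θ 0 = Γ.k := hθ.1
        intro hc
        have hre : (Γ.p 0 1 1 : ℝ) = θ h := by exact_mod_cast hc
        rw [← Γ.k_eq] at hre
        rw [hk0] at hlt
        linarith
      have heq := h1'.symm.trans h2'
      have hfac : (((Γ.p 0 1 1 : ℕ) : ℂ) - ((θ h : ℝ) : ℂ)) * (∑ y, v y) = 0 := by
        linear_combination heq
      rcases mul_eq_zero.mp hfac with hzz | hzz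
      · exact absurd (by linear_combination hzz) hkθ
      · exact hzz
    -- J v = 0
    have hJ : (∑ r ∈ Finset.range (Γ.D + 1), Γ.Amat r) *ᵥ v = 0 := by
      ext x
      have hmv : ((∑ r ∈ Finset.range (Γ.D + 1), Γ.Amat r) *ᵥ v) x
          = ∑ y, (∑ r ∈ Finset.range (Γ.D + 1), if Γ.G.dist x y = r then (1:ℂ) else 0) * v y := by
        rw [Matrix.mulVec, dotProduct]
        refine Finset.sum_congr rfl fun y _ => ?_
        congr 1
        rw [Matrix.sum_apply]
        rfl
      rw [hmv]
      have hone : ∀ y : α, (∑ r ∈ Finset.range (Γ.D + 1),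
          if Γ.G.dist x y = r then (1:ℂ) else 0) = 1 := by
        intro y
        rw [Finset.sum_ite_eq (Finset.range (Γ.D + 1)) (Γ.G.dist x y) (fun _ => (1:ℂ))]
        rw [if_pos (Finset.mem_range.mpr (by have := Γ.hdist x y; omega))]
      simp_rw [hone]
      simp only [one_mul]
      rw [hsumv]
      rfl
    -- s1 + s2 = 0
    have hadd : s1 + s2 = 0 := by
      have hz : (((s1 : ℝ) : ℂ) + ((s2 : ℝ) : ℂ)) • v = 0 := by
        rw [add_smul, ← hP1, ← hP2, ← Matrix.add_mulVec, Γ.PP_sum_J, hJ]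
      rcases smul_eq_zero.mp hz with hz' | hz'
      · exact_mod_cast hz'
      · exact absurd hz' hv0
    -- θ s2 = k s1
    have hrel : Γ.Amat 1 * Γ.PP (Γ.D - 1) = Γ.k • Γ.PP Γ.D := by
      have hh := Γ.A_mul_PP (Γ.D - 1) le_rfl
      rw [if_neg (by omega : ¬ (Γ.D - 1 = 0))] at hh
      have e1 : Γ.D - 1 + 1 = Γ.D := by omega
      rw [e1] at hh
      rw [hh, show Γ.b Γ.D = 0 from by rw [BDRG.b, if_pos rfl], zero_smul, zero_add, Γ.cD_eq]
    have hθrel : θ h * s2 = Γ.k * s1 := by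
      have happ : (Γ.Amat 1 * Γ.PP (Γ.D - 1)) *ᵥ v = (Γ.k • Γ.PP Γ.D) *ᵥ v := by rw [hrel]
      rw [← Matrix.mulVec_mulVec, hP2, Matrix.mulVec_smul, hveq,
        BDRG.real_smul_mat _ _, Matrix.smul_mulVec, hP1, smul_smul, smul_smul] at happ
      have hfac : ((((θ h) * s2 : ℝ) : ℂ) - ((Γ.k * s1 : ℝ) : ℂ)) • v = 0 := by
        rw [sub_smul]
        rw [show (((θ h) * s2 : ℝ) : ℂ) = ((s2:ℝ):ℂ) * ((θ h : ℝ):ℂ) from by push_cast; ring,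
          show ((Γ.k * s1 : ℝ) : ℂ) = ((Γ.k:ℝ):ℂ) * ((s1:ℝ):ℂ) from by push_cast; ring,
          happ, sub_self]
      rcases smul_eq_zero.mp hfac with hz' | hz'
      · have : ((θ h * s2 : ℝ) : ℂ) = ((Γ.k * s1 : ℝ) : ℂ) := by linear_combination hz'
        exact_mod_cast this
      · exact absurd hz' hv0
    -- θ h ≠ -k
    have hne : Γ.k + θ h ≠ 0 := by
      intro hc
      have hltD : θ Γ.D < θ h := hθ.2.1 h Γ.D (by omega) le_rfl
      have heigD := hθ.2.2.1 Γ.D le_rfl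
      have hbound := Γ.eig_bound (θ Γ.D) heigD
      have habs := abs_le.mp hbound
      have : θ h = -Γ.k := by linarith
      linarith [habs.1, this ▸ hltD]
    have hfin : s1 * (Γ.k + θ h) = 0 := by
      linear_combination (-1 : ℝ) * hθrel + θ h * hadd
    have hs1z : s1 = 0 := (mul_eq_zero.mp hfin).resolve_right hne
    exact ⟨hs1z, by linarith⟩
  · -- Part 2
    intro i j hi hj
    set XA : ℝ := (Fintype.card α : ℝ) with hXA
    set q : Polynomial ℝ := Γ.pp i * Γ.pp j * (Polynomial.C (Γ.k^2) - Polynomial.X^2) with hqdef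
    have hsum_eq : ∑ h ∈ Finset.range (Γ.D + 1),
          (Γ.pp i).eval (θ h) * (Γ.pp j).eval (θ h) * (Γ.k ^ 2 - (θ h) ^ 2) * (Γ.m (θ h) : ℝ)
        = ∑ h ∈ Finset.range (Γ.D + 1), q.eval (θ h) * (Γ.m (θ h) : ℝ) := by
      refine Finset.sum_congr rfl fun h _ => ?_
      rw [hqdef]
      simp only [Polynomial.eval_mul, Polynomial.eval_sub, Polynomial.eval_pow,
        Polynomial.eval_C, Polynomial.eval_X]
    have hq : q = Polynomial.C (Γ.k^2) * (Γ.pp i * Γ.pp j)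
        - (Polynomial.X * Γ.pp i) * (Polynomial.X * Γ.pp j) := by
      rw [hqdef]; ring
    have haq : Polynomial.aeval (Γ.Amat 1) q
        = Γ.k^2 • (Γ.PP i * Γ.PP j) - (Γ.Amat 1 * Γ.PP i) * (Γ.Amat 1 * Γ.PP j) := by
      rw [hq]
      simp only [map_sub, _root_.map_mul, Polynomial.aeval_C, Polynomial.aeval_X]
      rw [Γ.aeval_pp i (by omega), Γ.aeval_pp j (by omega), ← Algebra.smul_def]
    have hAPi := Γ.A_mul_PP i (by omega)
    have hAPj := Γ.A_mul_PP j (by omega)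
    have hexp : (Γ.b (i+1) • (if i = 0 then 0 else Γ.PP (i-1)) + Γ.c (i+1) • Γ.PP (i+1))
          * (Γ.b (j+1) • (if j = 0 then 0 else Γ.PP (j-1)) + Γ.c (j+1) • Γ.PP (j+1))
        = (Γ.b (i+1) * Γ.b (j+1)) •
            ((if i = 0 then 0 else Γ.PP (i-1)) * (if j = 0 then 0 else Γ.PP (j-1)))
          + (Γ.b (i+1) * Γ.c (j+1)) • ((if i = 0 then 0 else Γ.PP (i-1)) * Γ.PP (j+1))
          + (Γ.c (i+1) * Γ.b (j+1)) • (Γ.PP (i+1) * (if j = 0 then 0 else Γ.PP (j-1)))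
          + (Γ.c (i+1) * Γ.c (j+1)) • (Γ.PP (i+1) * Γ.PP (j+1)) := by
      rw [add_mul, mul_add, mul_add, BDRG.smul_mul_smul_mat _ _ _ _, BDRG.smul_mul_smul_mat _ _ _ _,
        BDRG.smul_mul_smul_mat _ _ _ _, BDRG.smul_mul_smul_mat _ _ _ _]
      abel
    have hT1 : (((if i = 0 then 0 else Γ.PP (i-1)) : Matrix α α ℂ)
          * (if j = 0 then 0 else Γ.PP (j-1))).trace
        = ((XA * (if i = 0 then 0 else if j = 0 then 0 else Γ.Wq (i-1) (j-1)) : ℝ) : ℂ) := by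
      by_cases h0 : i = 0
      · rw [if_pos h0, if_pos h0, Matrix.zero_mul, Matrix.trace_zero, mul_zero,
          Complex.ofReal_zero]
      · rw [if_neg h0, if_neg h0]
        by_cases h1 : j = 0
        · rw [if_pos h1, if_pos h1, Matrix.mul_zero, Matrix.trace_zero, mul_zero,
            Complex.ofReal_zero]
        · rw [if_neg h1, if_neg h1]
          exact Γ.trace_PP_mul (i-1) (j-1) (by omega) (by omega)
    have hT2 : (((if i = 0 then 0 else Γ.PP (i-1)) : Matrix α α ℂ) * Γ.PP (j+1)).trace
        = ((XA * (if i = 0 then 0 else Γ.Wq (i-1) (j+1)) : ℝ) : ℂ) := by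
      by_cases h0 : i = 0
      · rw [if_pos h0, if_pos h0, Matrix.zero_mul, Matrix.trace_zero, mul_zero,
          Complex.ofReal_zero]
      · rw [if_neg h0, if_neg h0]
        exact Γ.trace_PP_mul (i-1) (j+1) (by omega) (by omega)
    have hT3 : ((Γ.PP (i+1) : Matrix α α ℂ) * (if j = 0 then 0 else Γ.PP (j-1))).trace
        = ((XA * (if j = 0 then 0 else Γ.Wq (i+1) (j-1)) : ℝ) : ℂ) := by
      by_cases h1 : j = 0
      · rw [if_pos h1, if_pos h1, Matrix.mul_zero, Matrix.trace_zero, mul_zero,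
          Complex.ofReal_zero]
      · rw [if_neg h1, if_neg h1]
        exact Γ.trace_PP_mul (i+1) (j-1) (by omega) (by omega)
    have hT4 : ((Γ.PP (i+1) : Matrix α α ℂ) * Γ.PP (j+1)).trace
        = ((XA * Γ.Wq (i+1) (j+1) : ℝ) : ℂ) :=
      Γ.trace_PP_mul (i+1) (j+1) (by omega) (by omega)
    have hT0 : ((Γ.PP i : Matrix α α ℂ) * Γ.PP j).trace = ((XA * Γ.Wq i j : ℝ) : ℂ) :=
      Γ.trace_PP_mul i j (by omega) (by omega)
    have hG := Γ.scalarG i j hi hj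
    have hreal : Γ.k^2 * (XA * Γ.Wq i j)
        - (Γ.b (i+1) * Γ.b (j+1) * (XA * (if i = 0 then 0 else if j = 0 then 0 else Γ.Wq (i-1) (j-1)))
          + Γ.b (i+1) * Γ.c (j+1) * (XA * (if i = 0 then 0 else Γ.Wq (i-1) (j+1)))
          + Γ.c (i+1) * Γ.b (j+1) * (XA * (if j = 0 then 0 else Γ.Wq (i+1) (j-1)))
          + Γ.c (i+1) * Γ.c (j+1) * (XA * Γ.Wq (i+1) (j+1)))
        = (if i = j then XA * Γ.kv i * Γ.b i * Γ.b (i+1) else 0) := by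
      by_cases hij : i = j
      · rw [if_pos hij] at hG ⊢
        linear_combination XA * hG
      · rw [if_neg hij] at hG ⊢
        linear_combination XA * hG
    have hcast : ((∑ h ∈ Finset.range (Γ.D + 1),
          (Γ.pp i).eval (θ h) * (Γ.pp j).eval (θ h) * (Γ.k ^ 2 - (θ h) ^ 2) *
            (Γ.m (θ h) : ℝ) : ℝ) : ℂ)
        = (((if i = j then XA * Γ.kv i * Γ.b i * Γ.b (i+1) else 0) : ℝ) : ℂ) := by
      rw [hsum_eq, Γ.sum_spec θ hθ q, haq, Matrix.trace_sub, Matrix.trace_smul,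
        hAPi, hAPj, hexp]
      simp only [Matrix.trace_add, Matrix.trace_smul]
      rw [hT0, hT1, hT2, hT3, hT4, ← hreal]
      simp only [Complex.real_smul]
      push_cast
      ring
    have hfin := hcast
    rw [Complex.ofReal_inj] at hfin
    rw [hfin]
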